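/- arXiv:2408.00618 — 6 statements merged into one kernel-verified Lean document; each statement's English description precedes it below -/
import Mathlib

section
/- Let y ∈ ℝⁿ with n ≥ 1, let x_1,…,x_p ∈ ℝⁿ be continuous covariates each with ∑_{i=1}^n x_{ij} = 0, let c_1,…,c_K be categorical covariates where c_k : {1,…,n} → {1,…,L_k}, and let S be a set of pairs (k,k') with k < k' specifying categorical-categorical interactions. For a parameter θ = (α₀, α ∈ ℝᵖ, (β_k : {1,…,L_k} → ℝ)_{k=1}^K, (γ_{kk'} : {1,…,L_k}×{1,…,L_{k'}} → ℝ)_{(k,k')∈S}), define the fitted mean μ_i(θ) = α₀ + ∑_{j=1}^p x_{ij} α_j + ∑_{k=1}^K β_{k, c_k(i)} + ∑_{(k,k')∈S} γ_{kk', c_k(i), c_{k'}(i)}. Define the sample proportions π̂_{k,ℓ} = n^{-1} #{i : c_k(i) = ℓ} and joint sample proportions π̂_{kk',a,b} = n^{-1} #{i : c_k(i) = a, c_{k'}(i) = b}. Suppose θ̂ minimizes ∑_{i=1}^n (y_i − μ_i(θ))² subject to the ABCs: ∑_{ℓ=1}^{L_k} π̂_{k,ℓ} β_{k,ℓ} =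 0 for every k, and for every (k,k') ∈ S, ∑_b π̂_{kk',a,b} γ_{kk',a,b} = 0 for every a and ∑_a π̂_{kk',a,b} γ_{kk',a,b} = 0 for every b. Then the estimated intercept equals the sample mean of the response: α̂₀ = n^{-1} ∑_{i=1}^n y_i. -/
open Finset


private lemma abc_fiber_sum {α β : Type*} [Fintype α] [Fintype β] [DecidableEq β]
    (c : α → β) (g : β → ℝ) :
    ∑ i : α, g (c i) = ∑ b : β, ((univ.filter (fun i => c i = b)).card : ℝ) * g b := by
  have h : ∀ i : α, g (c i) = ∑ b : β, if c i = b then g b else 0 := fun i => by simp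
  rw [Finset.sum_congr rfl fun i _ => h i, Finset.sum_comm]
  refine Finset.sum_congr rfl fun b _ => ?_
  rw [← Finset.sum_filter, Finset.sum_const, nsmul_eq_mul]

/-- Theorem 1: the ABC-constrained OLS intercept equals the sample mean.
For any linear model with centered continuous covariates, categorical main effects, and
categorical-categorical interactions (but no categorical-continuous interactions), any
minimizer of the residual sum of squares subject to the abundance-based constraints
(with weights given by the sample proportions) has intercept equal to the sample mean
of the response. -/
theorem abc_ols_intercept_eq_sample_mean
    (n p K : ℕ) (hn : 1 ≤ n)
    (y : Fin n → ℝ) (x : Fin n → Fin p → ℝ)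
    (hx : ∀ j : Fin p, ∑ i : Fin n, x i j = 0)
    (L : Fin K → ℕ) (c : ∀ k : Fin K, Fin n → Fin (L k))
    (S : Finset (Fin K × Fin K)) (hS : ∀ q ∈ S, q.1 < q.2)
    -- the estimator
    (α₀ : ℝ) (α : Fin p → ℝ) (β : ∀ k : Fin K, Fin (L k) → ℝ)
    (γ : ∀ k k' : Fin K, Fin (L k) → Fin (L k') → ℝ)
    -- marginal ABCs for the estimator
    (hβ : ∀ k : Fin K, ∑ ℓ : Fin (L k),
      (((univ.filter (fun i : Fin n => c k i = ℓ)).card : ℝ) / n) * β k ℓ = 0)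
    -- joint ABCs for the estimator
    (hγ1 : ∀ q ∈ S, ∀ a : Fin (L q.1), ∑ b : Fin (L q.2),
      (((univ.filter (fun i : Fin n => c q.1 i = a ∧ c q.2 i = b)).card : ℝ) / n) *
        γ q.1 q.2 a b = 0)
    (hγ2 : ∀ q ∈ S, ∀ b : Fin (L q.2), ∑ a : Fin (L q.1),
      (((univ.filter (fun i : Fin n => c q.1 i = a ∧ c q.2 i = b)).card : ℝ) / n) *
        γ q.1 q.2 a b = 0)
    -- the estimator minimizes the RSS among all ABC-constrained parameters
    (hmin : ∀ (α₀' : ℝ) (α' : Fin p → ℝ) (β' : ∀ k : Fin K, Fin (L k) → ℝ)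
        (γ' : ∀ k k' : Fin K, Fin (L k) → Fin (L k') → ℝ),
      (∀ k : Fin K, ∑ ℓ : Fin (L k),
        (((univ.filter (fun i : Fin n => c k i = ℓ)).card : ℝ) / n) * β' k ℓ = 0) →
      (∀ q ∈ S, ∀ a : Fin (L q.1), ∑ b : Fin (L q.2),
        (((univ.filter (fun i : Fin n => c q.1 i = a ∧ c q.2 i = b)).card : ℝ) / n) *
          γ' q.1 q.2 a b = 0) →
      (∀ q ∈ S, ∀ b : Fin (L q.2), ∑ a : Fin (L q.1),
        (((univ.filter (fun i : Fin n => c q.1 i = a ∧ c q.2 i = b)).card : ℝ) / n) *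
          γ' q.1 q.2 a b = 0) →
      ∑ i : Fin n, (y i - (α₀ + (∑ j : Fin p, x i j * α j) + (∑ k : Fin K, β k (c k i)) +
          ∑ q ∈ S, γ q.1 q.2 (c q.1 i) (c q.2 i))) ^ 2 ≤
      ∑ i : Fin n, (y i - (α₀' + (∑ j : Fin p, x i j * α' j) + (∑ k : Fin K, β' k (c k i)) +
          ∑ q ∈ S, γ' q.1 q.2 (c q.1 i) (c q.2 i))) ^ 2) :
    α₀ = (∑ i : Fin n, y i) / n := by

  have hn' : (0:ℝ) < n := by exact_mod_cast hn
  have hne : (n:ℝ) ≠ 0 := ne_of_gt hn'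
  set r : Fin n → ℝ := fun i =>
    y i - (α₀ + (∑ j : Fin p, x i j * α j) + (∑ k : Fin K, β k (c k i)) +
      ∑ q ∈ S, γ q.1 q.2 (c q.1 i) (c q.2 i)) with hr
  -- step 1: sum of residuals is zero
  have key : ∀ t : ℝ, ∑ i : Fin n, (r i) ^ 2 ≤ ∑ i : Fin n, (r i - t) ^ 2 := by
    intro t
    have h := hmin (α₀ + t) α β γ hβ hγ1 hγ2
    calc ∑ i : Fin n, (r i) ^ 2
        ≤ ∑ i : Fin n, (y i - ((α₀ + t) + (∑ j : Fin p, x i j * α j) +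
            (∑ k : Fin K, β k (c k i)) +
            ∑ q ∈ S, γ q.1 q.2 (c q.1 i) (c q.2 i))) ^ 2 := h
      _ = ∑ i : Fin n, (r i - t) ^ 2 :=
          Finset.sum_congr rfl fun i _ => by rw [hr]; ring
  set s : ℝ := ∑ i : Fin n, r i with hs
  have expand : ∀ t : ℝ, ∑ i : Fin n, (r i - t) ^ 2
      = ∑ i : Fin n, (r i) ^ 2 - 2 * t * s + (n : ℝ) * t ^ 2 := by
    intro t
    have : ∀ i ∈ (univ : Finset (Fin n)),
        (r i - t) ^ 2 = (r i) ^ 2 - 2 * t * r i + t ^ 2 := fun i _ => by ring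
    rw [Finset.sum_congr rfl this, Finset.sum_add_distrib, Finset.sum_sub_distrib,
      ← Finset.mul_sum, Finset.sum_const, Finset.card_univ, Fintype.card_fin,
      nsmul_eq_mul, ← hs]
  have hs0 : s = 0 := by
    have h := key (s / n)
    rw [expand] at h
    have hsn : s = (n : ℝ) * (s / n) := by field_simp
    set t := s / n with ht
    have h3 : 0 ≤ -2 * t * s + (n:ℝ) * t ^ 2 := by linarith
    rw [hsn] at h3
    have h2 : 0 ≤ -(n:ℝ) * t ^ 2 := by nlinarith [h3]
    have ht2 : t ^ 2 = 0 := le_antisymm (by nlinarith [h2, hn']) (sq_nonneg t)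
    have ht0 : t = 0 := by
      have h4 : t * t = 0 := by nlinarith [ht2]
      rcases mul_eq_zero.mp h4 with h5 | h5 <;> exact h5
    rw [hsn, ht0, mul_zero]
  -- step 2: the constrained terms sum to zero over observations
  have hβ0 : ∀ k : Fin K, ∑ i : Fin n, β k (c k i) = 0 := by
    intro k
    rw [abc_fiber_sum (c k) (β k)]
    have e : ∑ ℓ : Fin (L k), ((univ.filter (fun i : Fin n => c k i = ℓ)).card : ℝ) * β k ℓ
        = (n:ℝ) * ∑ ℓ : Fin (L k),
          (((univ.filter (fun i : Fin n => c k i = ℓ)).card : ℝ) / n) * β k ℓ := by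
      rw [Finset.mul_sum]
      exact Finset.sum_congr rfl fun ℓ _ => by field_simp
    rw [e, hβ k, mul_zero]
  have hγ0 : ∀ q ∈ S, ∑ i : Fin n, γ q.1 q.2 (c q.1 i) (c q.2 i) = 0 := by
    intro q hq
    have e := abc_fiber_sum (fun i : Fin n => (c q.1 i, c q.2 i))
      (fun ab : Fin (L q.1) × Fin (L q.2) => γ q.1 q.2 ab.1 ab.2)
    rw [e, Fintype.sum_prod_type]
    have e2 : ∀ a : Fin (L q.1), ∀ b : Fin (L q.2),
        (univ.filter (fun i : Fin n => (c q.1 i, c q.2 i) = (a, b)))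
        = (univ.filter (fun i : Fin n => c q.1 i = a ∧ c q.2 i = b)) := by
      intro a b
      apply Finset.filter_congr
      intro i _
      simp [Prod.ext_iff]
    have : ∀ a ∈ (univ : Finset (Fin (L q.1))),
        ∑ b : Fin (L q.2),
          ((univ.filter (fun i : Fin n => (c q.1 i, c q.2 i) = (a, b))).card : ℝ) *
            γ q.1 q.2 a b = 0 := by
      intro a _
      have e3 : ∑ b : Fin (L q.2),
          ((univ.filter (fun i : Fin n => (c q.1 i, c q.2 i) = (a, b))).card : ℝ) *
            γ q.1 q.2 a b
          = (n:ℝ) * ∑ b : Fin (L q.2),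
            (((univ.filter (fun i : Fin n => c q.1 i = a ∧ c q.2 i = b)).card : ℝ) / n) *
              γ q.1 q.2 a b := by
        rw [Finset.mul_sum]
        refine Finset.sum_congr rfl fun b _ => ?_
        rw [e2 a b]; field_simp
      rw [e3, hγ1 q hq a, mul_zero]
    rw [Finset.sum_congr rfl this, Finset.sum_const, smul_zero]
  -- step 3: compute s explicitly
  have hx0 : ∑ i : Fin n, ∑ j : Fin p, x i j * α j = 0 := by
    rw [Finset.sum_comm]
    refine Finset.sum_eq_zero fun j _ => ?_
    rw [← Finset.sum_mul, hx j, zero_mul]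
  have hB : ∑ i : Fin n, ∑ k : Fin K, β k (c k i) = 0 := by
    rw [Finset.sum_comm]
    exact Finset.sum_eq_zero fun k _ => hβ0 k
  have hG : ∑ i : Fin n, ∑ q ∈ S, γ q.1 q.2 (c q.1 i) (c q.2 i) = 0 := by
    rw [Finset.sum_comm]
    exact Finset.sum_eq_zero fun q hq => hγ0 q hq
  have hsval : s = (∑ i : Fin n, y i) - (n:ℝ) * α₀ := by
    rw [hs]
    simp only [hr]
    have e : ∀ i ∈ (univ : Finset (Fin n)), y i - (α₀ + (∑ j : Fin p, x i j * α j) +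
        (∑ k : Fin K, β k (c k i)) + ∑ q ∈ S, γ q.1 q.2 (c q.1 i) (c q.2 i))
        = y i - α₀ - (∑ j : Fin p, x i j * α j) - (∑ k : Fin K, β k (c k i)) -
          (∑ q ∈ S, γ q.1 q.2 (c q.1 i) (c q.2 i)) := fun i _ => by ring
    rw [Finset.sum_congr rfl e]
    rw [Finset.sum_sub_distrib, Finset.sum_sub_distrib, Finset.sum_sub_distrib,
      Finset.sum_sub_distrib, hx0, hB, hG, Finset.sum_const, Finset.card_univ,
      Fintype.card_fin, nsmul_eq_mul]
    ring
  rw [hsval] at hs0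
  field_simp
  linarith [hs0]
end

section
/- Let y ∈ ℝⁿ, and let r : {1,…,n} → {1,…,L_R} and s : {1,…,n} → {1,…,L_S} be two categorical covariates with joint cell counts n_{ℓm} = #{i : r(i) = ℓ, s(i) = m} all positive; write π̂_{ℓm} = n_{ℓm}/n and let π̂_{ℓ·}, π̂_{·m} be the marginal proportions. Consider (a) the main-only two-way ANOVA: minimize ∑_i (y_i − α₀ − β₁_{r(i)} − β₂_{s(i)})² subject to ∑_ℓ π̂_{ℓ·} β₁_ℓ = 0 and ∑_m π̂_{·m} β₂_m = 0; and (b) the cat-modified model: minimize ∑_i (y_i − α₀ − β₁_{r(i)} − β₂_{s(i)} − γ_{r(i) s(i)})² subject additionally to the joint ABCs ∑_m π̂_{ℓm} γ_{ℓm} = 0 for every ℓ and ∑_ℓ π̂_{ℓm} γ_{ℓm} = 0 for every m. Assume both constrained least-squares problems have unique minimizers. Then all estimated main effects coincide between the two models: α̂₀^M = α̂₀, β̂₁^M_ℓ = β̂₁_ℓ for every ℓ = 1,…,L_R, and β̂₂^M_m = β̂₂_m for every m = 1,…,L_S. -/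
open Finset

/-- Theorem 2: invariance of all main effects in the two-way ANOVA.
Under abundance-based constraints, all estimated main effects of the main-only two-way
ANOVA coincide with those of the cat-modified model that additionally includes the
interaction `γ` (identified by the joint ABCs).  Both constrained least-squares
problems are assumed to have unique minimizers. -/
theorem abc_two_way_anova_main_effect_invariance
    {n LR LS : ℕ} (y : Fin n → ℝ) (r : Fin n → Fin LR) (s : Fin n → Fin LS)
    (hcell : ∀ (ℓ : Fin LR) (m : Fin LS),
      0 < (univ.filter (fun i : Fin n => r i = ℓ ∧ s i = m)).card)
    -- main-only estimates
    (α₀M : ℝ) (β1M : Fin LR → ℝ) (β2M : Fin LS → ℝ)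
    -- cat-modified estimates
    (α₀ : ℝ) (β1 : Fin LR → ℝ) (β2 : Fin LS → ℝ) (γ : Fin LR → Fin LS → ℝ)
    -- ABCs for the main-only estimator
    (hM1 : ∑ ℓ : Fin LR,
      (((univ.filter (fun i : Fin n => r i = ℓ)).card : ℝ) / n) * β1M ℓ = 0)
    (hM2 : ∑ m : Fin LS,
      (((univ.filter (fun i : Fin n => s i = m)).card : ℝ) / n) * β2M m = 0)
    -- the main-only estimator minimizes the RSS among ABC-constrained parameters
    (hMmin : ∀ (a0 : ℝ) (b1 : Fin LR → ℝ) (b2 : Fin LS → ℝ),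
      (∑ ℓ : Fin LR,
        (((univ.filter (fun i : Fin n => r i = ℓ)).card : ℝ) / n) * b1 ℓ = 0) →
      (∑ m : Fin LS,
        (((univ.filter (fun i : Fin n => s i = m)).card : ℝ) / n) * b2 m = 0) →
      ∑ i : Fin n, (y i - (α₀M + β1M (r i) + β2M (s i))) ^ 2 ≤
        ∑ i : Fin n, (y i - (a0 + b1 (r i) + b2 (s i))) ^ 2)
    -- ... and it is the unique such minimizer
    (hMuniq : ∀ (a0 : ℝ) (b1 : Fin LR → ℝ) (b2 : Fin LS → ℝ),
      (∑ ℓ : Fin LR,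
        (((univ.filter (fun i : Fin n => r i = ℓ)).card : ℝ) / n) * b1 ℓ = 0) →
      (∑ m : Fin LS,
        (((univ.filter (fun i : Fin n => s i = m)).card : ℝ) / n) * b2 m = 0) →
      (∑ i : Fin n, (y i - (a0 + b1 (r i) + b2 (s i))) ^ 2 ≤
        ∑ i : Fin n, (y i - (α₀M + β1M (r i) + β2M (s i))) ^ 2) →
      a0 = α₀M ∧ b1 = β1M ∧ b2 = β2M)
    -- ABCs for the cat-modified estimator (marginal and joint)
    (hC1 : ∑ ℓ : Fin LR,
      (((univ.filter (fun i : Fin n => r i = ℓ)).card : ℝ) / n) * β1 ℓ = 0)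
    (hC2 : ∑ m : Fin LS,
      (((univ.filter (fun i : Fin n => s i = m)).card : ℝ) / n) * β2 m = 0)
    (hC3 : ∀ ℓ : Fin LR, ∑ m : Fin LS,
      (((univ.filter (fun i : Fin n => r i = ℓ ∧ s i = m)).card : ℝ) / n) * γ ℓ m = 0)
    (hC4 : ∀ m : Fin LS, ∑ ℓ : Fin LR,
      (((univ.filter (fun i : Fin n => r i = ℓ ∧ s i = m)).card : ℝ) / n) * γ ℓ m = 0)
    -- the cat-modified estimator minimizes the RSS among ABC-constrained parameters
    (hCmin : ∀ (a0 : ℝ) (b1 : Fin LR → ℝ) (b2 : Fin LS → ℝ) (g : Fin LR → Fin LS → ℝ),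
      (∑ ℓ : Fin LR,
        (((univ.filter (fun i : Fin n => r i = ℓ)).card : ℝ) / n) * b1 ℓ = 0) →
      (∑ m : Fin LS,
        (((univ.filter (fun i : Fin n => s i = m)).card : ℝ) / n) * b2 m = 0) →
      (∀ ℓ : Fin LR, ∑ m : Fin LS,
        (((univ.filter (fun i : Fin n => r i = ℓ ∧ s i = m)).card : ℝ) / n) * g ℓ m = 0) →
      (∀ m : Fin LS, ∑ ℓ : Fin LR,
        (((univ.filter (fun i : Fin n => r i = ℓ ∧ s i = m)).card : ℝ) / n) * g ℓ m = 0) →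
      ∑ i : Fin n, (y i - (α₀ + β1 (r i) + β2 (s i) + γ (r i) (s i))) ^ 2 ≤
        ∑ i : Fin n, (y i - (a0 + b1 (r i) + b2 (s i) + g (r i) (s i))) ^ 2)
    -- ... and it is the unique such minimizer
    (hCuniq : ∀ (a0 : ℝ) (b1 : Fin LR → ℝ) (b2 : Fin LS → ℝ) (g : Fin LR → Fin LS → ℝ),
      (∑ ℓ : Fin LR,
        (((univ.filter (fun i : Fin n => r i = ℓ)).card : ℝ) / n) * b1 ℓ = 0) →
      (∑ m : Fin LS,
        (((univ.filter (fun i : Fin n => s i = m)).card : ℝ) / n) * b2 m = 0) →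
      (∀ ℓ : Fin LR, ∑ m : Fin LS,
        (((univ.filter (fun i : Fin n => r i = ℓ ∧ s i = m)).card : ℝ) / n) * g ℓ m = 0) →
      (∀ m : Fin LS, ∑ ℓ : Fin LR,
        (((univ.filter (fun i : Fin n => r i = ℓ ∧ s i = m)).card : ℝ) / n) * g ℓ m = 0) →
      (∑ i : Fin n, (y i - (a0 + b1 (r i) + b2 (s i) + g (r i) (s i))) ^ 2 ≤
        ∑ i : Fin n, (y i - (α₀ + β1 (r i) + β2 (s i) + γ (r i) (s i))) ^ 2) →
      a0 = α₀ ∧ b1 = β1 ∧ b2 = β2 ∧ g = γ) :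
    α₀M = α₀ ∧ β1M = β1 ∧ β2M = β2 := by
  
  classical
  set c : Fin LR → Fin LS → ℝ :=
    fun ℓ m => ((univ.filter (fun i : Fin n => r i = ℓ ∧ s i = m)).card : ℝ) with hc
  -- fiberwise summation
  have hsum : ∀ F : Fin LR → Fin LS → ℝ, ∑ i : Fin n, F (r i) (s i)
      = ∑ ℓ : Fin LR, ∑ m : Fin LS, c ℓ m * F ℓ m := by
    intro F
    have h0 : ∑ p : Fin LR × Fin LS,
        ∑ i ∈ univ.filter (fun i : Fin n => (r i, s i) = p), F (r i) (s i)
        = ∑ i : Fin n, F (r i) (s i) :=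
      Finset.sum_fiberwise_of_maps_to (fun i _ => Finset.mem_univ _) _
    rw [← h0, Fintype.sum_prod_type]
    refine Finset.sum_congr rfl (fun ℓ _ => Finset.sum_congr rfl (fun m _ => ?_))
    have hfe : (univ.filter (fun i : Fin n => (r i, s i) = (ℓ, m)))
        = (univ.filter (fun i : Fin n => r i = ℓ ∧ s i = m)) := by
      apply Finset.filter_congr
      intro i _
      simp [Prod.ext_iff]
    rw [hfe]
    rw [Finset.sum_congr rfl (fun i hi => ?_)]
    · rw [Finset.sum_const, nsmul_eq_mul, hc]
    · simp only [Finset.mem_filter] at hi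
      rw [hi.2.1, hi.2.2]
  -- joint ABCs without division
  have hC3' : ∀ ℓ : Fin LR, ∑ m : Fin LS, c ℓ m * γ ℓ m = 0 := by
    intro ℓ
    by_cases hn : (n : ℝ) = 0
    · have hn0 : n = 0 := by exact_mod_cast hn
      subst hn0
      have : ∀ m : Fin LS, c ℓ m = 0 := by
        intro m
        simp [hc]
      simp [this]
    · have h := hC3 ℓ
      have : ∑ m : Fin LS, c ℓ m * γ ℓ m
          = (n : ℝ) * ∑ m : Fin LS, (c ℓ m / n) * γ ℓ m := by
        rw [Finset.mul_sum]
        refine Finset.sum_congr rfl (fun m _ => ?_)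
        field_simp
      rw [this, h, mul_zero]
  have hC4' : ∀ m : Fin LS, ∑ ℓ : Fin LR, c ℓ m * γ ℓ m = 0 := by
    intro m
    by_cases hn : (n : ℝ) = 0
    · have hn0 : n = 0 := by exact_mod_cast hn
      subst hn0
      have : ∀ ℓ : Fin LR, c ℓ m = 0 := by
        intro ℓ
        simp [hc]
      simp [this]
    · have h := hC4 m
      have : ∑ ℓ : Fin LR, c ℓ m * γ ℓ m
          = (n : ℝ) * ∑ ℓ : Fin LR, (c ℓ m / n) * γ ℓ m := by
        rw [Finset.mul_sum]
        refine Finset.sum_congr rfl (fun ℓ _ => ?_)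
        field_simp
      rw [this, h, mul_zero]
  -- orthogonality of γ to additive functions
  have key : ∀ (a0 : ℝ) (b1 : Fin LR → ℝ) (b2 : Fin LS → ℝ),
      ∑ i : Fin n, (a0 + b1 (r i) + b2 (s i)) * γ (r i) (s i) = 0 := by
    intro a0 b1 b2
    rw [hsum (fun ℓ m => (a0 + b1 ℓ + b2 m) * γ ℓ m)]
    have hterm : ∀ ℓ m, c ℓ m * ((a0 + b1 ℓ + b2 m) * γ ℓ m)
        = (a0 + b1 ℓ) * (c ℓ m * γ ℓ m) + b2 m * (c ℓ m * γ ℓ m) := by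
      intro ℓ m; ring
    simp_rw [hterm, Finset.sum_add_distrib]
    have h1 : ∑ ℓ : Fin LR, ∑ m : Fin LS, (a0 + b1 ℓ) * (c ℓ m * γ ℓ m) = 0 := by
      refine Finset.sum_eq_zero (fun ℓ _ => ?_)
      rw [← Finset.mul_sum, hC3' ℓ, mul_zero]
    have h2 : ∑ ℓ : Fin LR, ∑ m : Fin LS, b2 m * (c ℓ m * γ ℓ m) = 0 := by
      rw [Finset.sum_comm]
      refine Finset.sum_eq_zero (fun m _ => ?_)
      rw [← Finset.mul_sum, hC4' m, mul_zero]
    rw [h1, h2, add_zero]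
  -- RSS decomposition
  have decomp : ∀ (a0 : ℝ) (b1 : Fin LR → ℝ) (b2 : Fin LS → ℝ),
      ∑ i : Fin n, (y i - (a0 + b1 (r i) + b2 (s i) + γ (r i) (s i))) ^ 2
      = ∑ i : Fin n, (y i - (a0 + b1 (r i) + b2 (s i))) ^ 2
        + ∑ i : Fin n, ((γ (r i) (s i)) ^ 2 - 2 * y i * γ (r i) (s i)) := by
    intro a0 b1 b2
    have hpt : ∀ i : Fin n,
        (y i - (a0 + b1 (r i) + b2 (s i) + γ (r i) (s i))) ^ 2
        = (y i - (a0 + b1 (r i) + b2 (s i))) ^ 2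
          + ((γ (r i) (s i)) ^ 2 - 2 * y i * γ (r i) (s i))
          + 2 * ((a0 + b1 (r i) + b2 (s i)) * γ (r i) (s i)) := fun i => by ring
    calc ∑ i : Fin n, (y i - (a0 + b1 (r i) + b2 (s i) + γ (r i) (s i))) ^ 2
        = ∑ i : Fin n, ((y i - (a0 + b1 (r i) + b2 (s i))) ^ 2
            + ((γ (r i) (s i)) ^ 2 - 2 * y i * γ (r i) (s i))
            + 2 * ((a0 + b1 (r i) + b2 (s i)) * γ (r i) (s i))) :=
          Finset.sum_congr rfl (fun i _ => hpt i)
      _ = ∑ i : Fin n, (y i - (a0 + b1 (r i) + b2 (s i))) ^ 2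
            + ∑ i : Fin n, ((γ (r i) (s i)) ^ 2 - 2 * y i * γ (r i) (s i))
            + 2 * ∑ i : Fin n, ((a0 + b1 (r i) + b2 (s i)) * γ (r i) (s i)) := by
          rw [Finset.sum_add_distrib, Finset.sum_add_distrib, Finset.mul_sum]
      _ = _ := by rw [key a0 b1 b2, mul_zero, add_zero]
  -- (α₀, β1, β2) minimizes the main-only problem
  have hmain : ∑ i : Fin n, (y i - (α₀ + β1 (r i) + β2 (s i))) ^ 2
      ≤ ∑ i : Fin n, (y i - (α₀M + β1M (r i) + β2M (s i))) ^ 2 := by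
    have h := hCmin α₀M β1M β2M γ hM1 hM2 hC3 hC4
    rw [decomp α₀ β1 β2, decomp α₀M β1M β2M] at h
    linarith
  obtain ⟨e1, e2, e3⟩ := hMuniq α₀ β1 β2 hC1 hC2 hmain
  exact ⟨e1.symm, e2.symm, e3.symm⟩
end

section
/- Let y ∈ ℝⁿ, x ∈ ℝⁿ a continuous covariate, and r : {1,…,n} → {1,…,L} a categorical covariate with all group counts n_ℓ = #{i : r(i) = ℓ} positive; write π̂_ℓ = n_ℓ/n, x̄_ℓ = n_ℓ^{-1} ∑_{i : r(i)=ℓ} x_i, and σ̂²_{x[ℓ]} = n_ℓ^{-1} ∑_{i : r(i)=ℓ} x_i² − x̄_ℓ². Assume the equal-variance condition: σ̂²_{x[ℓ]} = σ̂²_{x[1]} for all ℓ = 1,…,L. Consider (a) the main-only model: minimize ∑_i (y_i − α₀ − α₁ x_i − β_{r(i)})² subject to ∑_ℓ π̂_ℓ β_ℓ = 0; and (b) the cat-modified model: minimize ∑_i (y_i − α₀ − α₁ x_i − β_{r(i)} − γ_{r(i)} x_i)² subject to ∑_ℓ π̂_ℓ β_ℓ = 0 and ∑_ℓ π̂_ℓ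 γ_ℓ = 0. Assume both constrained least-squares problems have unique minimizers. Then the estimated main x-effects coincide: α̂₁^M = α̂₁. -/
open Finset

/-- The (scaled) sample variance of `x` within group `ℓ` of the categorical covariate `r`:
`σ̂²_{x[ℓ]} = n_ℓ⁻¹ ∑_{i : r i = ℓ} x i ^ 2 − x̄_ℓ ^ 2`. -/
noncomputable def groupVar {n L : ℕ} (x : Fin n → ℝ) (r : Fin n → Fin L) (ℓ : Fin L) : ℝ :=
  (∑ i ∈ Finset.univ.filter (fun i : Fin n => r i = ℓ), x i ^ 2) /
      ((Finset.univ.filter (fun i : Fin n => r i = ℓ)).card : ℝ) -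
    ((∑ i ∈ Finset.univ.filter (fun i : Fin n => r i = ℓ), x i) /
      ((Finset.univ.filter (fun i : Fin n => r i = ℓ)).card : ℝ)) ^ 2

/-!
Both fits satisfy the normal equations of the main-effect directions, which are admissible
under the ABC: their residuals sum to zero within every group and are orthogonal to `x`.
Hence so is the difference of the two residual vectors, `δ i = u (r i) + v (r i) * x i` with
`v ℓ = α₁ - α₁M + γ ℓ`. Within group `ℓ` this forces `∑ δ i * x i = v ℓ * n_ℓ * σ̂²_{x[ℓ]}`;
summing over groups, with equal variances `σ²` and `∑ n_ℓ γ ℓ = 0`, gives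
`σ² * n * (α₁ - α₁M) = 0`. If `σ² = 0`, `x` is constant within groups and the slope of the
main-only model is not identifiable, contradicting uniqueness.
-/

theorem sum_mul_eq_zero_of_forall_sum_sq_le {ι : Type*} [Fintype ι] (ε D : ι → ℝ)
    (h : ∀ t : ℝ, ∑ i, ε i ^ 2 ≤ ∑ i, (ε i - t * D i) ^ 2) : ∑ i, ε i * D i = 0 := by
  have hquad : ∀ t : ℝ, 0 ≤ (∑ i, D i ^ 2) * (t * t) + (-2 * ∑ i, ε i * D i) * t + 0 := by
    intro t
    have expand : ∑ i, (ε i - t * D i) ^ 2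
        = ∑ i, ε i ^ 2 + ((∑ i, D i ^ 2) * (t * t) + (-2 * ∑ i, ε i * D i) * t) := by
      simp only [sum_mul, mul_sum, ← sum_add_distrib]
      exact sum_congr rfl fun i _ => by ring
    linarith [h t]
  have hdisc := discrim_le_zero hquad
  rw [discrim] at hdisc
  nlinarith [sq_nonneg (∑ i, ε i * D i)]

theorem sum_card_filter_eq_card {ι κ : Type*} [Fintype ι] [Fintype κ] [DecidableEq κ]
    (r : ι → κ) : ∑ ℓ, (#(univ.filter (fun i => r i = ℓ)) : ℝ) = Fintype.card ι := by
  rw [← card_univ, card_eq_sum_card_fiberwise (fun i _ => mem_univ (r i))]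
  push_cast
  rfl

section MainEffects

variable {ι κ : Type*} [Fintype ι] [DecidableEq κ]

def OrthogonalToMainEffects (x : ι → ℝ) (r : ι → κ) (ε : ι → ℝ) : Prop :=
  (∀ ℓ, ∑ i ∈ univ.filter (fun i => r i = ℓ), ε i = 0) ∧ ∑ i, ε i * x i = 0

variable {x : ι → ℝ} {r : ι → κ}

theorem OrthogonalToMainEffects.sub {ε ε' : ι → ℝ} (h : OrthogonalToMainEffects x r ε)
    (h' : OrthogonalToMainEffects x r ε') : OrthogonalToMainEffects x r (ε - ε') := by
  refine ⟨fun ℓ => ?_, ?_⟩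
  · simp only [Pi.sub_apply, sum_sub_distrib, h.1 ℓ, h'.1 ℓ, sub_zero]
  · simp only [Pi.sub_apply, sub_mul, sum_sub_distrib, h.2, h'.2, sub_zero]

variable [Fintype κ]

theorem orthogonalToMainEffects_of_minimizer {π : κ → ℝ} (hπ : ∑ ℓ, π ℓ = 1) {y : ι → ℝ}
    {a₀ a₁ : ℝ} {b : κ → ℝ} (hb : π ⬝ᵥ b = 0)
    (hmin : ∀ (a₀' a₁' : ℝ) (b' : κ → ℝ), π ⬝ᵥ b' = 0 →
      ∑ i, (y i - (a₀ + a₁ * x i + b (r i))) ^ 2 ≤ ∑ i, (y i - (a₀' + a₁' * x i + b' (r i))) ^ 2) :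
    OrthogonalToMainEffects x r fun i => y i - (a₀ + a₁ * x i + b (r i)) := by
  have orth : ∀ (d₀ d₁ : ℝ) (d : κ → ℝ), π ⬝ᵥ d = 0 →
      ∑ i, (y i - (a₀ + a₁ * x i + b (r i))) * (d₀ + d₁ * x i + d (r i)) = 0 := by
    intro d₀ d₁ d hd
    refine sum_mul_eq_zero_of_forall_sum_sq_le _ _ fun t => ?_
    have hbt : π ⬝ᵥ (b + t • d) = 0 := by
      rw [dotProduct_add, dotProduct_smul, hb, hd, smul_zero, add_zero]
    refine (hmin (a₀ + t * d₀) (a₁ + t * d₁) _ hbt).trans_eq (sum_congr rfl fun i _ => ?_)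
    simp only [Pi.add_apply, Pi.smul_apply, smul_eq_mul]
    ring
  refine ⟨fun ℓ => ?_, by simpa using orth 0 1 0 (dotProduct_zero π)⟩
  -- the indicator of group `ℓ` is the admissible direction `π ℓ + (Pi.single ℓ 1 - π ℓ)`
  have hd : π ⬝ᵥ (Pi.single ℓ 1 - fun _ => π ℓ) = 0 := by
    rw [dotProduct_sub, dotProduct_single, mul_one]
    simp [dotProduct, ← sum_mul, hπ]
  rw [sum_filter]
  refine (sum_congr rfl fun i _ => ?_).trans (orth (π ℓ) 0 _ hd)
  by_cases h : r i = ℓ <;> simp [h]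

end MainEffects

section GroupVariance

variable {n L : ℕ} (x : Fin n → ℝ) (r : Fin n → Fin L)

noncomputable def groupMean (ℓ : Fin L) : ℝ :=
  (∑ i ∈ univ.filter (fun i => r i = ℓ), x i) / #(univ.filter (fun i => r i = ℓ))

theorem sum_sub_groupMean (ℓ : Fin L) :
    ∑ i ∈ univ.filter (fun i => r i = ℓ), (x i - groupMean x r ℓ) = 0 := by
  rcases (univ.filter (fun i => r i = ℓ)).eq_empty_or_nonempty with hs | hs
  · simp [hs]
  · rw [sum_sub_distrib, sum_const, nsmul_eq_mul, groupMean,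
      mul_div_cancel₀ _ (by simpa using hs.card_pos.ne'), sub_self]

theorem card_mul_groupVar (ℓ : Fin L) :
    #(univ.filter (fun i => r i = ℓ)) * groupVar x r ℓ =
      ∑ i ∈ univ.filter (fun i => r i = ℓ), (x i - groupMean x r ℓ) ^ 2 := by
  rcases (univ.filter (fun i => r i = ℓ)).eq_empty_or_nonempty with hs | hs
  · simp [hs]
  · have hc : (#(univ.filter (fun i => r i = ℓ)) : ℝ) ≠ 0 := by simpa using hs.card_pos.ne'
    simp only [groupVar, groupMean, sub_sq, sum_add_distrib, sum_sub_distrib, ← sum_mul,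
      ← mul_sum, sum_const, nsmul_eq_mul]
    field_simp
    ring

theorem sum_affine_mul_eq_mul_card_mul_groupVar {ℓ : Fin L} {u v : ℝ}
    (h : ∑ i ∈ univ.filter (fun i => r i = ℓ), (u + v * x i) = 0) :
    ∑ i ∈ univ.filter (fun i => r i = ℓ), (u + v * x i) * x i =
      v * (#(univ.filter (fun i => r i = ℓ)) * groupVar x r ℓ) := by
  set m := groupMean x r ℓ
  calc ∑ i ∈ univ.filter (fun i => r i = ℓ), (u + v * x i) * x i
      = v * ∑ i ∈ univ.filter (fun i => r i = ℓ), (x i - m) ^ 2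
        + (u + v * m) * ∑ i ∈ univ.filter (fun i => r i = ℓ), (x i - m)
        + m * ∑ i ∈ univ.filter (fun i => r i = ℓ), (u + v * x i) := by
        simp only [mul_sum, ← sum_add_distrib]
        exact sum_congr rfl fun i _ => by ring
    _ = _ := by rw [h, sum_sub_groupMean, card_mul_groupVar]; ring

theorem sum_mul_card_mul_groupVar_eq_zero {u v : Fin L → ℝ}
    (h : OrthogonalToMainEffects x r fun i => u (r i) + v (r i) * x i) :
    ∑ ℓ, v ℓ * (#(univ.filter (fun i => r i = ℓ)) * groupVar x r ℓ) = 0 := by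
  rw [← h.2, ← sum_fiberwise univ r]
  refine sum_congr rfl fun ℓ _ => ?_
  have on_fiber : ∀ f : Fin L → ℝ → ℝ,
      ∑ i ∈ univ.filter (fun i => r i = ℓ), f (r i) (x i) =
        ∑ i ∈ univ.filter (fun i => r i = ℓ), f ℓ (x i) :=
    fun f => sum_congr rfl fun i hi => by rw [(mem_filter.mp hi).2]
  have hsum := (on_fiber fun k t => u k + v k * t).symm.trans (h.1 ℓ)
  rw [on_fiber fun k t => (u k + v k * t) * t, sum_affine_mul_eq_mul_card_mul_groupVar x r hsum]

theorem mul_card_mul_eq_zero_of_forall_groupVar_eq {σ2 c : ℝ} (hvar : ∀ ℓ, groupVar x r ℓ = σ2)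
    {u g : Fin L → ℝ} (hg : ∑ ℓ, (#(univ.filter (fun i => r i = ℓ)) : ℝ) * g ℓ = 0)
    (h : OrthogonalToMainEffects x r fun i => u (r i) + (c + g (r i)) * x i) :
    σ2 * (n * c) = 0 := by
  have hv := sum_mul_card_mul_groupVar_eq_zero x r (v := fun ℓ => c + g ℓ) h
  calc σ2 * (n * c)
      = ∑ ℓ, (c * #(univ.filter (fun i => r i = ℓ))
          + #(univ.filter (fun i => r i = ℓ)) * g ℓ) * σ2 := by
        rw [← sum_mul, sum_add_distrib, ← mul_sum, hg, sum_card_filter_eq_card, Fintype.card_fin]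
        ring
    _ = 0 := by
        rw [← hv]
        exact sum_congr rfl fun ℓ _ => by rw [hvar ℓ]; ring

theorem eq_groupMean_of_groupVar_eq_zero {i : Fin n} (h : groupVar x r (r i) = 0) :
    x i = groupMean x r (r i) := by
  have hsq : ∑ j ∈ univ.filter (fun j => r j = r i), (x j - groupMean x r (r i)) ^ 2 = 0 := by
    rw [← card_mul_groupVar, h, mul_zero]
  have hi := (sum_eq_zero_iff_of_nonneg fun j _ => sq_nonneg _).mp hsq i (by simp)
  exact sub_eq_zero.mp (pow_eq_zero_iff two_ne_zero |>.mp hi)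

theorem exists_fit_eq_of_groupVar_eq_zero (hvar : ∀ ℓ, groupVar x r ℓ = 0) {π : Fin L → ℝ}
    (hπ : ∑ ℓ, π ℓ = 1) {a₀ a₁ : ℝ} {b : Fin L → ℝ} (hb : π ⬝ᵥ b = 0) :
    ∃ (a₀' : ℝ) (b' : Fin L → ℝ), π ⬝ᵥ b' = 0 ∧
      ∀ i, a₀' + (a₁ + 1) * x i + b' (r i) = a₀ + a₁ * x i + b (r i) := by
  set m := π ⬝ᵥ groupMean x r
  refine ⟨a₀ - m, b - groupMean x r + fun _ => m, ?_, fun i => ?_⟩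
  · have hconst : (π ⬝ᵥ fun _ => m) = m := by simp [dotProduct, ← sum_mul, hπ]
    rw [dotProduct_add, dotProduct_sub, hb, hconst, zero_sub, neg_add_cancel]
  · rw [Pi.add_apply, Pi.sub_apply, eq_groupMean_of_groupVar_eq_zero x r (hvar (r i))]
    ring

end GroupVariance

theorem abc_ancova_slope_invariance_general
    {n L : ℕ} (hL : 0 < L)
    (y x : Fin n → ℝ) (r : Fin n → Fin L)
    (hcount : ∀ ℓ : Fin L, 0 < (univ.filter (fun i : Fin n => r i = ℓ)).card)
    -- equal-variance condition
    (heqvar : ∀ ℓ : Fin L, groupVar x r ℓ = groupVar x r ⟨0, hL⟩)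
    -- main-only estimates
    (α₀M α₁M : ℝ) (βM : Fin L → ℝ)
    -- cat-modified estimates
    (α₀ α₁ : ℝ) (β : Fin L → ℝ) (γ : Fin L → ℝ)
    -- ABC for the main-only estimator
    (hM : ∑ ℓ : Fin L,
      (((univ.filter (fun i : Fin n => r i = ℓ)).card : ℝ) / n) * βM ℓ = 0)
    -- the main-only estimator is a constrained least-squares minimizer
    (hMmin : ∀ (a0 a1 : ℝ) (b : Fin L → ℝ),
      (∑ ℓ : Fin L,
        (((univ.filter (fun i : Fin n => r i = ℓ)).card : ℝ) / n) * b ℓ = 0) →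
      ∑ i : Fin n, (y i - (α₀M + α₁M * x i + βM (r i))) ^ 2 ≤
        ∑ i : Fin n, (y i - (a0 + a1 * x i + b (r i))) ^ 2)
    -- ... and it is the unique such minimizer
    (hMuniq : ∀ (a0 a1 : ℝ) (b : Fin L → ℝ),
      (∑ ℓ : Fin L,
        (((univ.filter (fun i : Fin n => r i = ℓ)).card : ℝ) / n) * b ℓ = 0) →
      (∑ i : Fin n, (y i - (a0 + a1 * x i + b (r i))) ^ 2 ≤
        ∑ i : Fin n, (y i - (α₀M + α₁M * x i + βM (r i))) ^ 2) →
      a0 = α₀M ∧ a1 = α₁M ∧ b = βM)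
    -- ABCs for the cat-modified estimator
    (hC1 : ∑ ℓ : Fin L,
      (((univ.filter (fun i : Fin n => r i = ℓ)).card : ℝ) / n) * β ℓ = 0)
    (hC2 : ∑ ℓ : Fin L,
      (((univ.filter (fun i : Fin n => r i = ℓ)).card : ℝ) / n) * γ ℓ = 0)
    -- the cat-modified estimator is a constrained least-squares minimizer
    (hCmin : ∀ (a0 a1 : ℝ) (b g : Fin L → ℝ),
      (∑ ℓ : Fin L,
        (((univ.filter (fun i : Fin n => r i = ℓ)).card : ℝ) / n) * b ℓ = 0) →
      (∑ ℓ : Fin L,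
        (((univ.filter (fun i : Fin n => r i = ℓ)).card : ℝ) / n) * g ℓ = 0) →
      ∑ i : Fin n, (y i - (α₀ + α₁ * x i + β (r i) + γ (r i) * x i)) ^ 2 ≤
        ∑ i : Fin n, (y i - (a0 + a1 * x i + b (r i) + g (r i) * x i)) ^ 2) :
    α₁M = α₁ := by
  set π : Fin L → ℝ := fun ℓ => (#(univ.filter (fun i : Fin n => r i = ℓ)) : ℝ) / n
  obtain ⟨i₀, -⟩ := card_pos.mp (hcount ⟨0, hL⟩)
  have hn : (n : ℝ) ≠ 0 := Nat.cast_ne_zero.mpr i₀.pos.ne'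
  have hπ : ∑ ℓ, π ℓ = 1 := by
    rw [← sum_div, sum_card_filter_eq_card, Fintype.card_fin, div_self hn]
  have hMorth := orthogonalToMainEffects_of_minimizer hπ hM hMmin
  -- the cat-modified fit, with `γ` fixed, is a main-only fit to `y - γ (r ·) * x`
  have hCorth := orthogonalToMainEffects_of_minimizer (y := fun i => y i - γ (r i) * x i) hπ hC1
    fun a0 a1 b hb => by simpa only [sub_add_eq_sub_sub_swap] using hCmin a0 a1 b γ hb hC2
  have hδ : OrthogonalToMainEffects x r fun i =>
      (α₀ - α₀M + (β (r i) - βM (r i))) + (α₁ - α₁M + γ (r i)) * x i := by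
    convert hMorth.sub hCorth using 1
    funext i
    simp only [Pi.sub_apply]
    ring
  have hγ : ∑ ℓ, (#(univ.filter (fun i => r i = ℓ)) : ℝ) * γ ℓ = 0 := by
    simpa only [div_mul_eq_mul_div, ← sum_div, div_eq_zero_iff, hn, or_false] using hC2
  have hslope := mul_card_mul_eq_zero_of_forall_groupVar_eq x r heqvar
    (u := fun ℓ => α₀ - α₀M + (β ℓ - βM ℓ)) hγ hδ
  rcases mul_eq_zero.mp hslope with hσ | hn_mul
  · obtain ⟨a₀', b', hb', hfit⟩ :=
      exists_fit_eq_of_groupVar_eq_zero x r (fun ℓ => (heqvar ℓ).trans hσ) hπ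
        (a₀ := α₀M) (a₁ := α₁M) hM
    have hunique := hMuniq a₀' (α₁M + 1) b' hb' (by simp only [hfit, le_refl])
    linarith [hunique.2.1]
  · simpa [hn, sub_eq_zero, eq_comm] using hn_mul

/-- Theorem 3: invariance of the main `x`-effect in the ANCOVA model.
Under abundance-based constraints and the equal-variance condition, the estimated main
`x`-effect of the main-only model coincides with that of the cat-modified model that
additionally includes the categorical-continuous interaction.  Both constrained
least-squares problems are assumed to have unique minimizers. -/
theorem abc_ancova_slope_invariance
    {n L : ℕ} (hL : 0 < L)
    (y x : Fin n → ℝ) (r : Fin n → Fin L)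
    (hcount : ∀ ℓ : Fin L, 0 < (univ.filter (fun i : Fin n => r i = ℓ)).card)
    -- equal-variance condition
    (heqvar : ∀ ℓ : Fin L, groupVar x r ℓ = groupVar x r ⟨0, hL⟩)
    -- main-only estimates
    (α₀M α₁M : ℝ) (βM : Fin L → ℝ)
    -- cat-modified estimates
    (α₀ α₁ : ℝ) (β : Fin L → ℝ) (γ : Fin L → ℝ)
    -- ABC for the main-only estimator
    (hM : ∑ ℓ : Fin L,
      (((univ.filter (fun i : Fin n => r i = ℓ)).card : ℝ) / n) * βM ℓ = 0)
    -- the main-only estimator is a constrained least-squares minimizer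
    (hMmin : ∀ (a0 a1 : ℝ) (b : Fin L → ℝ),
      (∑ ℓ : Fin L,
        (((univ.filter (fun i : Fin n => r i = ℓ)).card : ℝ) / n) * b ℓ = 0) →
      ∑ i : Fin n, (y i - (α₀M + α₁M * x i + βM (r i))) ^ 2 ≤
        ∑ i : Fin n, (y i - (a0 + a1 * x i + b (r i))) ^ 2)
    -- ... and it is the unique such minimizer
    (hMuniq : ∀ (a0 a1 : ℝ) (b : Fin L → ℝ),
      (∑ ℓ : Fin L,
        (((univ.filter (fun i : Fin n => r i = ℓ)).card : ℝ) / n) * b ℓ = 0) →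
      (∑ i : Fin n, (y i - (a0 + a1 * x i + b (r i))) ^ 2 ≤
        ∑ i : Fin n, (y i - (α₀M + α₁M * x i + βM (r i))) ^ 2) →
      a0 = α₀M ∧ a1 = α₁M ∧ b = βM)
    -- ABCs for the cat-modified estimator
    (hC1 : ∑ ℓ : Fin L,
      (((univ.filter (fun i : Fin n => r i = ℓ)).card : ℝ) / n) * β ℓ = 0)
    (hC2 : ∑ ℓ : Fin L,
      (((univ.filter (fun i : Fin n => r i = ℓ)).card : ℝ) / n) * γ ℓ = 0)
    -- the cat-modified estimator is a constrained least-squares minimizer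
    (hCmin : ∀ (a0 a1 : ℝ) (b g : Fin L → ℝ),
      (∑ ℓ : Fin L,
        (((univ.filter (fun i : Fin n => r i = ℓ)).card : ℝ) / n) * b ℓ = 0) →
      (∑ ℓ : Fin L,
        (((univ.filter (fun i : Fin n => r i = ℓ)).card : ℝ) / n) * g ℓ = 0) →
      ∑ i : Fin n, (y i - (α₀ + α₁ * x i + β (r i) + γ (r i) * x i)) ^ 2 ≤
        ∑ i : Fin n, (y i - (a0 + a1 * x i + b (r i) + g (r i) * x i)) ^ 2)
    -- ... and it is the unique such minimizer
    (hCuniq : ∀ (a0 a1 : ℝ) (b g : Fin L → ℝ),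
      (∑ ℓ : Fin L,
        (((univ.filter (fun i : Fin n => r i = ℓ)).card : ℝ) / n) * b ℓ = 0) →
      (∑ ℓ : Fin L,
        (((univ.filter (fun i : Fin n => r i = ℓ)).card : ℝ) / n) * g ℓ = 0) →
      (∑ i : Fin n, (y i - (a0 + a1 * x i + b (r i) + g (r i) * x i)) ^ 2 ≤
        ∑ i : Fin n, (y i - (α₀ + α₁ * x i + β (r i) + γ (r i) * x i)) ^ 2) →
      a0 = α₀ ∧ a1 = α₁ ∧ b = β ∧ g = γ) :
    α₁M = α₁ :=
  abc_ancova_slope_invariance_general hL y x r hcount heqvar α₀M α₁M βM α₀ α₁ β γ hM hMmin hMuniq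
    hC1 hC2 hCmin
end

section
/- Let y ∈ ℝⁿ, let x_1,…,x_p ∈ ℝⁿ be continuous covariates, and let r : {1,…,n} → {1,…,L} be a categorical covariate with all group counts n_ℓ positive and sample proportions π̂_ℓ = n_ℓ/n. Let H₀ be the orthogonal projection of ℝⁿ onto the subspace spanned by x_2,…,x_p together with the L group indicator vectors of r, and let ê₁ = x_1 − H₀ x_1 be the residual of x_1 after regressing it on these variables. Assume the equal-covariance condition: n_ℓ^{-1} ∑_{i : r(i)=ℓ} x_{i1} ê_{i1} takes the same value for every ℓ = 1,…,L. Consider (a) the main-only model: minimize ∑_i (y_i − α₀ − ∑_j x_{ij} α_j − β_{r(i)})² subject to ∑_ℓ π̂_ℓ β_ℓ = 0; and (b) the cat-modified model in which only x_1 is interacted: minimize ∑_i (y_i − α₀ − ∑_j x_{ij} α_j − β_{r(i)} − γ_{r(i)} x_{i1})² subject to ∑_ℓ π̂_ℓ β_ℓ = 0 and ∑_ℓ π̂_ℓ γ_ℓ = 0. Assume both constrained least-squares problems have unique minimizers. Then the estimated main x_1-effects coincide: α̂₁^M = α̂₁. -/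
/-! An abundance-based constraint only fixes how a constant is split between the intercept
and the group effects, so both estimators are unconstrained least-squares fits. By
Frisch–Waugh–Lovell the main-only slope satisfies `⟨ê₁, y⟩ = α̂₁ᴹ ‖ê₁‖²`, and, freezing `γ̂`,
the cat-modified fit is a main-only fit of `y - γ̂_{r(i)} x_{i1}`, so
`⟨ê₁, y - γ̂_r x₁⟩ = α̂₁ ‖ê₁‖²`. When every within-group mean of `x₁ ê₁` equals `c`, the
correction term is `∑_ℓ γ̂_ℓ ∑_{r(i)=ℓ} x_{i1} ê_{i1} = n c ∑_ℓ π̂_ℓ γ̂_ℓ = 0`. Uniqueness of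
the main-only fit rules out `ê₁ = 0`: otherwise `x₁` lies in the span of the other regressors
and its coefficient is not identified. -/

open Finset Matrix

section LeastSquares

variable {ι : Type*} [Fintype ι]

def rss (z f : ι → ℝ) : ℝ := ∑ i, (z i - f i) ^ 2

theorem rss_add_right (z f h : ι → ℝ) : rss z (f + h) = rss (z - h) f :=
  sum_congr rfl fun i _ => by simp only [Pi.add_apply, Pi.sub_apply]; ring

theorem rss_add_smul (z f e : ι → ℝ) (t : ℝ) :
    rss z (f + t • e) = rss z f - 2 * t * (e ⬝ᵥ (z - f)) + t ^ 2 * (e ⬝ᵥ e) := by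
  simp only [rss, dotProduct, mul_sum, ← sum_sub_distrib, ← sum_add_distrib]
  refine sum_congr rfl fun i _ => ?_
  simp only [Pi.add_apply, Pi.sub_apply, Pi.smul_apply, smul_eq_mul]
  ring

theorem dotProduct_sub_eq_zero_of_forall_rss_le {z f e : ι → ℝ}
    (h : ∀ t : ℝ, rss z f ≤ rss z (f + t • e)) : e ⬝ᵥ (z - f) = 0 := by
  have hdiscr := discrim_le_zero (K := ℝ) (a := e ⬝ᵥ e) (b := -2 * (e ⬝ᵥ (z - f))) (c := 0)
    fun t => by linarith [h t, rss_add_smul z f e t]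
  rw [discrim] at hdiscr
  nlinarith

theorem dotProduct_eq_zero_of_mem_span {R : Type*} [CommSemiring R] {S : Set (ι → R)}
    {e w : ι → R} (h : ∀ v ∈ S, e ⬝ᵥ v = 0) (hw : w ∈ Submodule.span R S) : e ⬝ᵥ w = 0 :=
  (Submodule.span_le (p := LinearMap.ker (dotProductBilin R R e))).mpr h hw

end LeastSquares

section Model

variable {n q L : ℕ} (x1 : Fin n → ℝ) (xo : Fin q → Fin n → ℝ) (r : Fin n → Fin L)

def groupIndicator (ℓ : Fin L) : Fin n → ℝ := fun i => if r i = ℓ then 1 else 0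

def nuisanceSpan : Submodule ℝ (Fin n → ℝ) :=
  Submodule.span ℝ (Set.range xo ∪ Set.range (groupIndicator r))

noncomputable def groupProportion (ℓ : Fin L) : ℝ := (#{i | r i = ℓ} : ℝ) / n

def mainFit (a0 a1 : ℝ) (ao : Fin q → ℝ) (b : Fin L → ℝ) : Fin n → ℝ :=
  fun i => a0 + a1 * x1 i + (∑ j, ao j * xo j i) + b (r i)

theorem sum_groupProportion (hn : n ≠ 0) : ∑ ℓ, groupProportion r ℓ = 1 := by
  have hcard : ∑ ℓ, (#{i | r i = ℓ} : ℝ) = n := by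
    rw [← Nat.cast_sum, ← card_eq_sum_card_fiberwise fun i _ => mem_univ (r i), card_univ,
      Fintype.card_fin]
  simp only [groupProportion]
  rw [← sum_div, hcard, div_self (Nat.cast_ne_zero.mpr hn)]

theorem exists_abc_mainFit_eq (a0 a1 : ℝ) (ao : Fin q → ℝ) (b : Fin L → ℝ) :
    ∃ a0' b', ∑ ℓ, groupProportion r ℓ * b' ℓ = 0 ∧
      mainFit x1 xo r a0' a1 ao b' = mainFit x1 xo r a0 a1 ao b := by
  set s := ∑ ℓ, groupProportion r ℓ * b ℓ
  refine ⟨a0 + s, fun ℓ => b ℓ - s, ?_, funext fun i => by simp only [mainFit]; ring⟩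
  rcases eq_or_ne n 0 with rfl | hn
  · -- every proportion is the junk value `_ / 0 = 0`
    simp [groupProportion]
  · simp only [mul_sub, sum_sub_distrib, ← sum_mul, sum_groupProportion r hn]
    ring

theorem sum_comp_mul_eq_zero_of_groupMean_eq (w : Fin n → ℝ) (g : Fin L → ℝ)
    (hmean : ∀ ℓ ℓ' : Fin L, (∑ i with r i = ℓ, w i) / (#{i | r i = ℓ} : ℝ) =
      (∑ i with r i = ℓ', w i) / (#{i | r i = ℓ'} : ℝ))
    (hg : ∑ ℓ, groupProportion r ℓ * g ℓ = 0) :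
    ∑ i, g (r i) * w i = 0 := by
  rcases eq_or_ne n 0 with rfl | hn
  · simp
  obtain ⟨m, hm⟩ : ∃ m, ∀ ℓ, (∑ i with r i = ℓ, w i) / (#{i | r i = ℓ} : ℝ) = m := by
    rcases isEmpty_or_nonempty (Fin L) with hL | ⟨⟨ℓ₀⟩⟩
    · exact ⟨0, fun ℓ => isEmptyElim ℓ⟩
    · exact ⟨_, fun ℓ => hmean ℓ ℓ₀⟩
  have hgroup : ∀ ℓ, ∑ i with r i = ℓ, w i = n * m * groupProportion r ℓ := fun ℓ => by
    rw [← card_smul_expect, expect_eq_sum_div_card, hm, nsmul_eq_mul, groupProportion]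
    field_simp
  calc ∑ i, g (r i) * w i = ∑ ℓ, g ℓ * ∑ i with r i = ℓ, w i := by
        rw [← sum_fiberwise univ r]
        refine sum_congr rfl fun ℓ _ => ?_
        rw [mul_sum]
        exact sum_congr rfl fun i hi => by rw [(mem_filter.mp hi).2]
    _ = n * m * ∑ ℓ, groupProportion r ℓ * g ℓ := by
        simp only [hgroup, mul_sum]
        exact sum_congr rfl fun ℓ _ => by ring
    _ = 0 := by rw [hg, mul_zero]

variable {x1 xo r}

theorem sum_mul_groupIndicator (d : Fin L → ℝ) (i : Fin n) :
    ∑ ℓ, d ℓ * groupIndicator r ℓ i = d (r i) := by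
  simp [groupIndicator]

theorem mainFit_sub_smul_mem_span (a0 a1 : ℝ) (ao : Fin q → ℝ) (b : Fin L → ℝ) :
    mainFit x1 xo r a0 a1 ao b - a1 • x1 ∈ nuisanceSpan xo r := by
  have hdecomp : mainFit x1 xo r a0 a1 ao b - a1 • x1 =
      ∑ j, ao j • xo j + ∑ ℓ, (a0 + b ℓ) • groupIndicator r ℓ := by
    ext i
    simp only [mainFit, Pi.add_apply, Pi.sub_apply, Pi.smul_apply, smul_eq_mul,
      Finset.sum_apply, sum_mul_groupIndicator]
    ring
  rw [hdecomp]
  exact add_mem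
    (sum_mem fun j _ => Submodule.smul_mem _ _ (Submodule.subset_span (.inl ⟨j, rfl⟩)))
    (sum_mem fun ℓ _ => Submodule.smul_mem _ _ (Submodule.subset_span (.inr ⟨ℓ, rfl⟩)))

variable {e1 : Fin n → ℝ}

theorem exists_mainFit_eq_add_smul
    (hx : x1 - e1 ∈ nuisanceSpan xo r)
    (a0 a1 : ℝ) (ao : Fin q → ℝ) (b : Fin L → ℝ) (t : ℝ) :
    ∃ ao' b', mainFit x1 xo r a0 (a1 + t) ao' b' = mainFit x1 xo r a0 a1 ao b + t • e1 := by
  rw [nuisanceSpan, Submodule.span_union] at hx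
  obtain ⟨u, hu, v, hv, huv⟩ := Submodule.mem_sup.mp hx
  obtain ⟨c, rfl⟩ := (Submodule.mem_span_range_iff_exists_fun ℝ).mp hu
  obtain ⟨d, rfl⟩ := (Submodule.mem_span_range_iff_exists_fun ℝ).mp hv
  refine ⟨ao - t • c, b - t • d, funext fun i => ?_⟩
  have hi := congrFun huv i
  simp only [Pi.add_apply, Pi.sub_apply, Finset.sum_apply, sum_mul_groupIndicator,
    Pi.smul_apply, smul_eq_mul] at hi
  simp only [mainFit, Pi.add_apply, Pi.sub_apply, Pi.smul_apply, smul_eq_mul, sub_mul,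
    sum_sub_distrib, mul_assoc, ← mul_sum]
  linear_combination -t * hi

theorem exists_abc_mainFit_eq_add_smul
    (hx : x1 - e1 ∈ nuisanceSpan xo r)
    (a0 a1 : ℝ) (ao : Fin q → ℝ) (b : Fin L → ℝ) (t : ℝ) :
    ∃ a0' ao' b', ∑ ℓ, groupProportion r ℓ * b' ℓ = 0 ∧
      mainFit x1 xo r a0' (a1 + t) ao' b' = mainFit x1 xo r a0 a1 ao b + t • e1 := by
  obtain ⟨ao', b', hfit⟩ := exists_mainFit_eq_add_smul hx a0 a1 ao b t
  obtain ⟨a0', b'', hb'', hfit'⟩ := exists_abc_mainFit_eq x1 xo r a0 (a1 + t) ao' b'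
  exact ⟨a0', ao', b'', hb'', hfit'.trans hfit⟩

theorem dotProduct_mainFit
    (hx : x1 - e1 ∈ nuisanceSpan xo r)
    (horth : ∀ v ∈ Set.range xo ∪ Set.range (groupIndicator r), e1 ⬝ᵥ v = 0)
    (a0 a1 : ℝ) (ao : Fin q → ℝ) (b : Fin L → ℝ) :
    e1 ⬝ᵥ mainFit x1 xo r a0 a1 ao b = a1 * (e1 ⬝ᵥ e1) := by
  have hfit :=
    dotProduct_eq_zero_of_mem_span horth (mainFit_sub_smul_mem_span (x1 := x1) a0 a1 ao b)
  have hx1 := dotProduct_eq_zero_of_mem_span horth hx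
  rw [dotProduct_sub, dotProduct_smul, smul_eq_mul] at hfit
  rw [dotProduct_sub] at hx1
  linear_combination hfit + a1 * hx1

theorem dotProduct_eq_mul_of_forall_rss_le
    (hx : x1 - e1 ∈ nuisanceSpan xo r)
    (horth : ∀ v ∈ Set.range xo ∪ Set.range (groupIndicator r), e1 ⬝ᵥ v = 0)
    {z : Fin n → ℝ} {a0 a1 : ℝ} {ao : Fin q → ℝ} {b : Fin L → ℝ}
    (hmin : ∀ a0' a1' ao' b', ∑ ℓ, groupProportion r ℓ * b' ℓ = 0 →
      rss z (mainFit x1 xo r a0 a1 ao b) ≤ rss z (mainFit x1 xo r a0' a1' ao' b')) :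
    e1 ⬝ᵥ z = a1 * (e1 ⬝ᵥ e1) := by
  have hres : e1 ⬝ᵥ (z - mainFit x1 xo r a0 a1 ao b) = 0 :=
    dotProduct_sub_eq_zero_of_forall_rss_le fun t => by
      obtain ⟨a0', ao', b', hb', hfit⟩ := exists_abc_mainFit_eq_add_smul hx a0 a1 ao b t
      exact hfit ▸ hmin _ _ _ _ hb'
  rw [dotProduct_sub, sub_eq_zero] at hres
  rw [hres, dotProduct_mainFit hx horth]

end Model

theorem abc_single_interaction_slope_invariance_general
    {n q L : ℕ}
    (y x1 : Fin n → ℝ) (xo : Fin q → Fin n → ℝ) (r : Fin n → Fin L)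
    -- the residual of x₁ after regressing on x₂,…,x_p and the group indicators:
    (e1 : Fin n → ℝ)
    (he1span : (x1 - e1) ∈ Submodule.span ℝ
      (Set.range xo ∪
        Set.range (fun ℓ : Fin L => fun i : Fin n => if r i = ℓ then (1 : ℝ) else 0)))
    (he1orth : ∀ v ∈
      (Set.range xo ∪
        Set.range (fun ℓ : Fin L => fun i : Fin n => if r i = ℓ then (1 : ℝ) else 0)),
      ∑ i : Fin n, e1 i * v i = 0)
    -- equal-covariance condition: n_ℓ⁻¹ ∑_{i : r i = ℓ} x1 i * e1 i is the same for all ℓ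
    (heqcov : ∀ ℓ ℓ' : Fin L,
      (∑ i ∈ univ.filter (fun i : Fin n => r i = ℓ), x1 i * e1 i) /
          ((univ.filter (fun i : Fin n => r i = ℓ)).card : ℝ) =
        (∑ i ∈ univ.filter (fun i : Fin n => r i = ℓ'), x1 i * e1 i) /
          ((univ.filter (fun i : Fin n => r i = ℓ')).card : ℝ))
    -- main-only estimates
    (α₀M α₁M : ℝ) (αoM : Fin q → ℝ) (βM : Fin L → ℝ)
    -- cat-modified estimates
    (α₀ α₁ : ℝ) (αo : Fin q → ℝ) (β : Fin L → ℝ) (γ : Fin L → ℝ)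
    -- the main-only estimator is a constrained least-squares minimizer
    (hMmin : ∀ (a0 a1 : ℝ) (ao : Fin q → ℝ) (b : Fin L → ℝ),
      (∑ ℓ : Fin L,
        (((univ.filter (fun i : Fin n => r i = ℓ)).card : ℝ) / n) * b ℓ = 0) →
      ∑ i : Fin n, (y i - (α₀M + α₁M * x1 i + (∑ j : Fin q, αoM j * xo j i) +
          βM (r i))) ^ 2 ≤
        ∑ i : Fin n, (y i - (a0 + a1 * x1 i + (∑ j : Fin q, ao j * xo j i) +
          b (r i))) ^ 2)
    -- ... and it is the unique such minimizer
    (hMuniq : ∀ (a0 a1 : ℝ) (ao : Fin q → ℝ) (b : Fin L → ℝ),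
      (∑ ℓ : Fin L,
        (((univ.filter (fun i : Fin n => r i = ℓ)).card : ℝ) / n) * b ℓ = 0) →
      (∑ i : Fin n, (y i - (a0 + a1 * x1 i + (∑ j : Fin q, ao j * xo j i) +
          b (r i))) ^ 2 ≤
        ∑ i : Fin n, (y i - (α₀M + α₁M * x1 i + (∑ j : Fin q, αoM j * xo j i) +
          βM (r i))) ^ 2) →
      a0 = α₀M ∧ a1 = α₁M ∧ ao = αoM ∧ b = βM)
    -- ABCs for the cat-modified estimator
    (hC2 : ∑ ℓ : Fin L,
      (((univ.filter (fun i : Fin n => r i = ℓ)).card : ℝ) / n) * γ ℓ = 0)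
    -- the cat-modified estimator is a constrained least-squares minimizer
    (hCmin : ∀ (a0 a1 : ℝ) (ao : Fin q → ℝ) (b g : Fin L → ℝ),
      (∑ ℓ : Fin L,
        (((univ.filter (fun i : Fin n => r i = ℓ)).card : ℝ) / n) * b ℓ = 0) →
      (∑ ℓ : Fin L,
        (((univ.filter (fun i : Fin n => r i = ℓ)).card : ℝ) / n) * g ℓ = 0) →
      ∑ i : Fin n, (y i - (α₀ + α₁ * x1 i + (∑ j : Fin q, αo j * xo j i) +
          β (r i) + γ (r i) * x1 i)) ^ 2 ≤
        ∑ i : Fin n, (y i - (a0 + a1 * x1 i + (∑ j : Fin q, ao j * xo j i) +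
          b (r i) + g (r i) * x1 i)) ^ 2) :
    α₁M = α₁ := by
  have hE : e1 ⬝ᵥ e1 ≠ 0 := by
    intro hE
    obtain ⟨a0, ao, b, hb, hfit⟩ := exists_abc_mainFit_eq_add_smul he1span α₀M α₁M αoM βM 1
    rw [dotProduct_self_eq_zero.mp hE, smul_zero, add_zero] at hfit
    have hslope := (hMuniq a0 (α₁M + 1) ao b hb (congrArg (rss y) hfit).le).2.1
    linarith
  have hMnormal : e1 ⬝ᵥ y = α₁M * (e1 ⬝ᵥ e1) :=
    dotProduct_eq_mul_of_forall_rss_le he1span he1orth hMmin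
  set interaction : Fin n → ℝ := fun i => γ (r i) * x1 i
  have hCnormal : e1 ⬝ᵥ (y - interaction) = α₁ * (e1 ⬝ᵥ e1) :=
    dotProduct_eq_mul_of_forall_rss_le he1span he1orth fun a0 a1 ao b hb => by
      have h : rss y (mainFit x1 xo r α₀ α₁ αo β + interaction) ≤
          rss y (mainFit x1 xo r a0 a1 ao b + interaction) := hCmin a0 a1 ao b γ hb hC2
      rwa [rss_add_right, rss_add_right] at h
  have hcat : e1 ⬝ᵥ interaction = 0 := by
    rw [← sum_comp_mul_eq_zero_of_groupMean_eq r (fun i => x1 i * e1 i) γ heqcov hC2]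
    exact sum_congr rfl fun i _ => by ring
  rw [dotProduct_sub, hcat, sub_zero, hMnormal] at hCnormal
  exact mul_right_cancel₀ hE hCnormal

/-- Theorem 5: invariance of the main `x₁`-effect when only `x₁` is
cat-modified.  `x1` is the interacted continuous covariate, `xo j` (for `j : Fin q`)
are the remaining continuous covariates `x₂,…,x_p`, and `r` is the categorical
covariate.  `e1` is the residual of `x1` after orthogonally projecting onto the span of
the remaining covariates and the group indicators of `r` (characterized by the two
hypotheses `he1span` and `he1orth`).  Under abundance-based constraints and the
equal-covariance condition on the within-group covariances of `x1` and `e1`, the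
estimated main `x₁`-effects of the main-only and cat-modified models coincide.  Both
constrained least-squares problems are assumed to have unique minimizers. -/
theorem abc_single_interaction_slope_invariance
    {n q L : ℕ}
    (y x1 : Fin n → ℝ) (xo : Fin q → Fin n → ℝ) (r : Fin n → Fin L)
    (hcount : ∀ ℓ : Fin L, 0 < (univ.filter (fun i : Fin n => r i = ℓ)).card)
    -- the residual of x₁ after regressing on x₂,…,x_p and the group indicators:
    (e1 : Fin n → ℝ)
    (he1span : (x1 - e1) ∈ Submodule.span ℝ
      (Set.range xo ∪
        Set.range (fun ℓ : Fin L => fun i : Fin n => if r i = ℓ then (1 : ℝ) else 0)))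
    (he1orth : ∀ v ∈
      (Set.range xo ∪
        Set.range (fun ℓ : Fin L => fun i : Fin n => if r i = ℓ then (1 : ℝ) else 0)),
      ∑ i : Fin n, e1 i * v i = 0)
    -- equal-covariance condition: n_ℓ⁻¹ ∑_{i : r i = ℓ} x1 i * e1 i is the same for all ℓ
    (heqcov : ∀ ℓ ℓ' : Fin L,
      (∑ i ∈ univ.filter (fun i : Fin n => r i = ℓ), x1 i * e1 i) /
          ((univ.filter (fun i : Fin n => r i = ℓ)).card : ℝ) =
        (∑ i ∈ univ.filter (fun i : Fin n => r i = ℓ'), x1 i * e1 i) /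
          ((univ.filter (fun i : Fin n => r i = ℓ')).card : ℝ))
    -- main-only estimates
    (α₀M α₁M : ℝ) (αoM : Fin q → ℝ) (βM : Fin L → ℝ)
    -- cat-modified estimates
    (α₀ α₁ : ℝ) (αo : Fin q → ℝ) (β : Fin L → ℝ) (γ : Fin L → ℝ)
    -- ABC for the main-only estimator
    (hM : ∑ ℓ : Fin L,
      (((univ.filter (fun i : Fin n => r i = ℓ)).card : ℝ) / n) * βM ℓ = 0)
    -- the main-only estimator is a constrained least-squares minimizer
    (hMmin : ∀ (a0 a1 : ℝ) (ao : Fin q → ℝ) (b : Fin L → ℝ),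
      (∑ ℓ : Fin L,
        (((univ.filter (fun i : Fin n => r i = ℓ)).card : ℝ) / n) * b ℓ = 0) →
      ∑ i : Fin n, (y i - (α₀M + α₁M * x1 i + (∑ j : Fin q, αoM j * xo j i) +
          βM (r i))) ^ 2 ≤
        ∑ i : Fin n, (y i - (a0 + a1 * x1 i + (∑ j : Fin q, ao j * xo j i) +
          b (r i))) ^ 2)
    -- ... and it is the unique such minimizer
    (hMuniq : ∀ (a0 a1 : ℝ) (ao : Fin q → ℝ) (b : Fin L → ℝ),
      (∑ ℓ : Fin L,
        (((univ.filter (fun i : Fin n => r i = ℓ)).card : ℝ) / n) * b ℓ = 0) →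
      (∑ i : Fin n, (y i - (a0 + a1 * x1 i + (∑ j : Fin q, ao j * xo j i) +
          b (r i))) ^ 2 ≤
        ∑ i : Fin n, (y i - (α₀M + α₁M * x1 i + (∑ j : Fin q, αoM j * xo j i) +
          βM (r i))) ^ 2) →
      a0 = α₀M ∧ a1 = α₁M ∧ ao = αoM ∧ b = βM)
    -- ABCs for the cat-modified estimator
    (hC1 : ∑ ℓ : Fin L,
      (((univ.filter (fun i : Fin n => r i = ℓ)).card : ℝ) / n) * β ℓ = 0)
    (hC2 : ∑ ℓ : Fin L,
      (((univ.filter (fun i : Fin n => r i = ℓ)).card : ℝ) / n) * γ ℓ = 0)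
    -- the cat-modified estimator is a constrained least-squares minimizer
    (hCmin : ∀ (a0 a1 : ℝ) (ao : Fin q → ℝ) (b g : Fin L → ℝ),
      (∑ ℓ : Fin L,
        (((univ.filter (fun i : Fin n => r i = ℓ)).card : ℝ) / n) * b ℓ = 0) →
      (∑ ℓ : Fin L,
        (((univ.filter (fun i : Fin n => r i = ℓ)).card : ℝ) / n) * g ℓ = 0) →
      ∑ i : Fin n, (y i - (α₀ + α₁ * x1 i + (∑ j : Fin q, αo j * xo j i) +
          β (r i) + γ (r i) * x1 i)) ^ 2 ≤
        ∑ i : Fin n, (y i - (a0 + a1 * x1 i + (∑ j : Fin q, ao j * xo j i) +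
          b (r i) + g (r i) * x1 i)) ^ 2)
    -- ... and it is the unique such minimizer
    (hCuniq : ∀ (a0 a1 : ℝ) (ao : Fin q → ℝ) (b g : Fin L → ℝ),
      (∑ ℓ : Fin L,
        (((univ.filter (fun i : Fin n => r i = ℓ)).card : ℝ) / n) * b ℓ = 0) →
      (∑ ℓ : Fin L,
        (((univ.filter (fun i : Fin n => r i = ℓ)).card : ℝ) / n) * g ℓ = 0) →
      (∑ i : Fin n, (y i - (a0 + a1 * x1 i + (∑ j : Fin q, ao j * xo j i) +
          b (r i) + g (r i) * x1 i)) ^ 2 ≤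
        ∑ i : Fin n, (y i - (α₀ + α₁ * x1 i + (∑ j : Fin q, αo j * xo j i) +
          β (r i) + γ (r i) * x1 i)) ^ 2) →
      a0 = α₀ ∧ a1 = α₁ ∧ ao = αo ∧ b = β ∧ g = γ) :
    α₁M = α₁ :=
  abc_single_interaction_slope_invariance_general y x1 xo r e1 he1span he1orth heqcov α₀M α₁M αoM βM
    α₀ α₁ αo β γ hMmin hMuniq hC2 hCmin
end

section
/- Let r : {1,…,n} → {1,…,L_R} and s : {1,…,n} → {1,…,L_S} be categorical covariates with all joint cell counts n_{ℓm} positive, and let 1, Z₁, Z₂, Z₁₂ denote respectively the all-ones column, the indicator matrices of r and s, and the indicator matrix of the joint cells (r,s). Let X^M = [1, Z₁, Z₂] with constraint matrix A^M encoding the marginal ABCs ∑_ℓ π̂_{ℓ·} β₁_ℓ = 0 and ∑_m π̂_{·m} β₂_m = 0, and let X = [1, Z₁, Z₂, Z₁₂] with constraint matrix A encoding these marginal ABCs together with the joint ABCs ∑_m π̂_{ℓm} γ_{ℓm} = 0 for every ℓ and ∑_ℓ π̂_{ℓm} γ_{ℓm} = 0 for every m. Let V^M and V be the covariance factors of the two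 constrained models (assumed to exist, i.e., the reparametrized designs have full column rank), and let Ŝ_M, Ŝ > 0 be residual scales with Ŝ ≤ Ŝ_M. Then for every main-effect coordinate j (the intercept, each coordinate of β₁, and each coordinate of β₂), the standard error under the cat-modified model is no larger than under the main-only model: Ŝ·√(V_{jj}) ≤ Ŝ_M·√(V^M_{jj}). -/
open Finset Matrix

noncomputable section

/-- Main-only two-way ANOVA design matrix `[1, Z₁, Z₂]`. -/
def designMain {n LR LS : ℕ} (r : Fin n → Fin LR) (s : Fin n → Fin LS) :
    Matrix (Fin n) (Unit ⊕ Fin LR ⊕ Fin LS) ℝ :=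
  Matrix.of fun i j =>
    match j with
    | Sum.inl _ => 1
    | Sum.inr (Sum.inl ℓ) => if r i = ℓ then 1 else 0
    | Sum.inr (Sum.inr m) => if s i = m then 1 else 0

/-- Cat-modified two-way ANOVA design matrix `[1, Z₁, Z₂, Z₁₂]`. -/
def designCat {n LR LS : ℕ} (r : Fin n → Fin LR) (s : Fin n → Fin LS) :
    Matrix (Fin n) ((Unit ⊕ Fin LR ⊕ Fin LS) ⊕ Fin LR × Fin LS) ℝ :=
  Matrix.of fun i j =>
    match j with
    | Sum.inl j' => designMain r s i j'
    | Sum.inr (ℓ, m) => if r i = ℓ ∧ s i = m then 1 else 0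

/-- Constraint matrix encoding the marginal abundance-based constraints
`∑_ℓ π̂_{ℓ·} β₁_ℓ = 0` and `∑_m π̂_{·m} β₂_m = 0`. -/
def constrMain {n LR LS : ℕ} (r : Fin n → Fin LR) (s : Fin n → Fin LS) :
    Matrix (Fin 2) (Unit ⊕ Fin LR ⊕ Fin LS) ℝ :=
  Matrix.of fun k j =>
    if k = 0 then
      match j with
      | Sum.inr (Sum.inl ℓ) => ((univ.filter (fun i : Fin n => r i = ℓ)).card : ℝ) / n
      | _ => 0
    else
      match j with
      | Sum.inr (Sum.inr m) => ((univ.filter (fun i : Fin n => s i = m)).card : ℝ) / n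
      | _ => 0

/-- Constraint matrix encoding the marginal abundance-based constraints together with
the joint constraints `∑_m π̂_{ℓm} γ_{ℓm} = 0` for every `ℓ` and
`∑_ℓ π̂_{ℓm} γ_{ℓm} = 0` for every `m`. -/
def constrCat {n LR LS : ℕ} (r : Fin n → Fin LR) (s : Fin n → Fin LS) :
    Matrix (Fin 2 ⊕ Fin LR ⊕ Fin LS) ((Unit ⊕ Fin LR ⊕ Fin LS) ⊕ Fin LR × Fin LS) ℝ :=
  Matrix.of fun k j =>
    match k with
    | Sum.inl k' =>
      match j with
      | Sum.inl j' => constrMain r s k' j'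
      | Sum.inr _ => 0
    | Sum.inr (Sum.inl ℓ) =>
      match j with
      | Sum.inl _ => 0
      | Sum.inr (ℓ', m) =>
        if ℓ' = ℓ then
          ((univ.filter (fun i : Fin n => r i = ℓ' ∧ s i = m)).card : ℝ) / n
        else 0
    | Sum.inr (Sum.inr m) =>
      match j with
      | Sum.inl _ => 0
      | Sum.inr (ℓ, m') =>
        if m' = m then
          ((univ.filter (fun i : Fin n => r i = ℓ ∧ s i = m')).card : ℝ) / n
        else 0

lemma dot_self_nonneg' {k : Type*} [Fintype k] (x : k → ℝ) : 0 ≤ x ⬝ᵥ x :=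
  Finset.sum_nonneg fun _ _ => mul_self_nonneg _

lemma dot_gram {k l : Type*} [Fintype k] [Fintype l] (A : Matrix k l ℝ) (x y : l → ℝ) :
    x ⬝ᵥ (Aᵀ*A) *ᵥ y = (A *ᵥ x) ⬝ᵥ (A *ᵥ y) := by
  rw [← Matrix.mulVec_mulVec, Matrix.dotProduct_mulVec, Matrix.vecMul_transpose]

lemma vecMul_symm {k : Type*} [Fintype k] (M : Matrix k k ℝ) (hsym : Mᵀ = M) (x : k → ℝ) :
    x ᵥ* M = M *ᵥ x := by
  rw [← Matrix.vecMul_transpose, hsym]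

lemma inv_psd {d : ℕ} (G : Matrix (Fin d) (Fin d) ℝ)
    (hsym : Gᵀ = G) (hG : IsUnit G.det)
    (hpsd : ∀ v : Fin d → ℝ, 0 ≤ v ⬝ᵥ G *ᵥ v) (a : Fin d → ℝ) :
    0 ≤ a ⬝ᵥ G⁻¹ *ᵥ a := by
  have hGu : G *ᵥ (G⁻¹ *ᵥ a) = a := by
    rw [Matrix.mulVec_mulVec, Matrix.mul_nonsing_inv _ hG, Matrix.one_mulVec]
  have h := hpsd (G⁻¹ *ᵥ a)
  rw [Matrix.dotProduct_mulVec, vecMul_symm _ hsym, hGu] at h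
  exact h

lemma cs_gram {d : ℕ} (G : Matrix (Fin d) (Fin d) ℝ)
    (hsym : Gᵀ = G) (hG : IsUnit G.det)
    (hpsd : ∀ v : Fin d → ℝ, 0 ≤ v ⬝ᵥ G *ᵥ v) (a w : Fin d → ℝ) :
    (a ⬝ᵥ w) * (a ⬝ᵥ w) ≤ (a ⬝ᵥ G⁻¹ *ᵥ a) * (w ⬝ᵥ G *ᵥ w) := by
  set u : Fin d → ℝ := G⁻¹ *ᵥ a with hu
  have hGu : G *ᵥ u = a := by
    rw [hu, Matrix.mulVec_mulVec, Matrix.mul_nonsing_inv _ hG, Matrix.one_mulVec]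
  have huGw : u ⬝ᵥ G *ᵥ w = a ⬝ᵥ w := by
    rw [Matrix.dotProduct_mulVec, vecMul_symm _ hsym, hGu]
  have hwGu : w ⬝ᵥ G *ᵥ u = a ⬝ᵥ w := by rw [hGu, dotProduct_comm]
  have huGu : u ⬝ᵥ G *ᵥ u = a ⬝ᵥ G⁻¹ *ᵥ a := by
    rw [Matrix.dotProduct_mulVec, vecMul_symm _ hsym, hGu, ← hu]
  have hquad : ∀ t : ℝ,
      0 ≤ (a ⬝ᵥ G⁻¹ *ᵥ a) * (t * t) + (-2 * (a ⬝ᵥ w)) * t + (w ⬝ᵥ G *ᵥ w) := by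
    intro t
    have h0 := hpsd (w - t • u)
    have hexp : (w - t • u) ⬝ᵥ G *ᵥ (w - t • u)
        = (w ⬝ᵥ G *ᵥ w) - t * (u ⬝ᵥ G *ᵥ w) - t * (w ⬝ᵥ G *ᵥ u)
          + (t * t) * (u ⬝ᵥ G *ᵥ u) := by
      simp only [Matrix.mulVec_sub, Matrix.mulVec_smul, dotProduct_sub, sub_dotProduct,
        smul_dotProduct, dotProduct_smul, smul_eq_mul]
      ring
    rw [hexp, huGw, hwGu, huGu] at h0
    nlinarith [h0]
  have hd := discrim_le_zero hquad
  rw [discrim] at hd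
  nlinarith [hd]

lemma sum_ind {LR LS : ℕ} (a : Fin LR) (b : Fin LS) (g : Fin LR × Fin LS → ℝ) :
    ∑ p : Fin LR × Fin LS, (if a = p.1 ∧ b = p.2 then (1:ℝ) else 0) * g p = g (a, b) := by
  rw [Finset.sum_eq_single (a, b)]
  · simp
  · intro p _ hp
    rw [if_neg, zero_mul]
    rintro ⟨h1, h2⟩
    exact hp (Prod.ext h1.symm h2.symm)
  · intro h; exact absurd (Finset.mem_univ _) h

lemma sum_fiber_cells {n LR LS : ℕ} (r : Fin n → Fin LR) (s : Fin n → Fin LS)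
    (g : Fin LR × Fin LS → ℝ) :
    ∑ i : Fin n, g (r i, s i)
      = ∑ p : Fin LR × Fin LS,
          ((univ.filter (fun i : Fin n => r i = p.1 ∧ s i = p.2)).card : ℝ) * g p := by
  classical
  calc ∑ i : Fin n, g (r i, s i)
      = ∑ p : Fin LR × Fin LS, ∑ i ∈ univ.filter (fun i => (r i, s i) = p), g (r i, s i) :=
        (Finset.sum_fiberwise _ _ _).symm
    _ = ∑ p : Fin LR × Fin LS, ∑ i ∈ univ.filter (fun i => (r i, s i) = p), g p := by
        refine Finset.sum_congr rfl fun p _ => Finset.sum_congr rfl fun i hi => ?_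
        rw [(Finset.mem_filter.1 hi).2]
    _ = ∑ p : Fin LR × Fin LS,
          ((univ.filter (fun i : Fin n => r i = p.1 ∧ s i = p.2)).card : ℝ) * g p := by
        refine Finset.sum_congr rfl fun p _ => ?_
        rw [Finset.sum_const, nsmul_eq_mul]
        congr 2
        apply congrArg
        apply Finset.filter_congr
        intro i _
        simp [Prod.ext_iff, eq_comm]

/-- Theorem 6: standard errors of all main effects do not increase
when the categorical-categorical interaction is added under ABCs.  `QM` and `Q` have
orthonormal columns spanning the null spaces of the respective constraint matrices, the
reparametrized designs have full column rank (so that the covariance factors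
`V = Q (X_Qᵀ X_Q)⁻¹ Qᵀ` exist), and the residual scales satisfy `S ≤ SM`.  Then for
every main-effect coordinate `j` the standard error under the cat-modified model is no
larger than under the main-only model. -/
theorem abc_two_way_anova_se_decrease
    {n LR LS : ℕ} (dM d : ℕ)
    (r : Fin n → Fin LR) (s : Fin n → Fin LS)
    (hcell : ∀ (ℓ : Fin LR) (m : Fin LS),
      0 < (univ.filter (fun i : Fin n => r i = ℓ ∧ s i = m)).card)
    (QM : Matrix (Unit ⊕ Fin LR ⊕ Fin LS) (Fin dM) ℝ)
    (Q : Matrix ((Unit ⊕ Fin LR ⊕ Fin LS) ⊕ Fin LR × Fin LS) (Fin d) ℝ)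
    -- orthonormal columns
    (hQMorth : QMᵀ * QM = 1)
    (hQorth : Qᵀ * Q = 1)
    -- the columns span the null spaces of the constraint matrices
    (hQMnull : ∀ θ : (Unit ⊕ Fin LR ⊕ Fin LS) → ℝ,
      (constrMain r s).mulVec θ = 0 ↔ ∃ w : Fin dM → ℝ, θ = QM.mulVec w)
    (hQnull : ∀ θ : ((Unit ⊕ Fin LR ⊕ Fin LS) ⊕ Fin LR × Fin LS) → ℝ,
      (constrCat r s).mulVec θ = 0 ↔ ∃ w : Fin d → ℝ, θ = Q.mulVec w)
    -- the reparametrized designs have full column rank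
    (hGramM : IsUnit ((designMain r s * QM)ᵀ * (designMain r s * QM)).det)
    (hGram : IsUnit ((designCat r s * Q)ᵀ * (designCat r s * Q)).det)
    -- residual scales
    (SM S : ℝ) (hSM : 0 < SM) (hS : 0 < S) (hle : S ≤ SM) :
    ∀ j : Unit ⊕ Fin LR ⊕ Fin LS,
      S * Real.sqrt
          ((Q * ((designCat r s * Q)ᵀ * (designCat r s * Q))⁻¹ * Qᵀ)
            (Sum.inl j) (Sum.inl j)) ≤
        SM * Real.sqrt
          ((QM * ((designMain r s * QM)ᵀ * (designMain r s * QM))⁻¹ * QMᵀ) j j) := by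
  classical
  intro j
  set XM := designMain r s with hXM
  set X := designCat r s with hXdef
  set GM := (XM * QM)ᵀ * (XM * QM) with hGMdef
  set G := (X * Q)ᵀ * (X * Q) with hGdef
  -- symmetry and PSD of Gram matrices
  have hGMsym : GMᵀ = GM := by
    rw [hGMdef]; rw [Matrix.transpose_mul, Matrix.transpose_transpose]
  have hGsym : Gᵀ = G := by
    rw [hGdef]; rw [Matrix.transpose_mul, Matrix.transpose_transpose]
  have hGMpsd : ∀ v : Fin dM → ℝ, 0 ≤ v ⬝ᵥ GM *ᵥ v := by
    intro v; rw [hGMdef, dot_gram]; exact dot_self_nonneg' _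
  have hGpsd : ∀ v : Fin d → ℝ, 0 ≤ v ⬝ᵥ G *ᵥ v := by
    intro v; rw [hGdef, dot_gram]; exact dot_self_nonneg' _
  -- the covariance column
  set e' : ((Unit ⊕ Fin LR ⊕ Fin LS) ⊕ Fin LR × Fin LS) → ℝ :=
    Pi.single (Sum.inl j) 1 with he'
  set b : Fin d → ℝ := Qᵀ *ᵥ e' with hb
  set w₀ : Fin d → ℝ := G⁻¹ *ᵥ b with hw₀
  set θ : ((Unit ⊕ Fin LR ⊕ Fin LS) ⊕ Fin LR × Fin LS) → ℝ := Q *ᵥ w₀ with hθdef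
  set v : ℝ := (Q * G⁻¹ * Qᵀ) (Sum.inl j) (Sum.inl j) with hvdef
  have hθV : θ = (Q * G⁻¹ * Qᵀ) *ᵥ e' := by
    rw [hθdef, hw₀, hb, Matrix.mulVec_mulVec, Matrix.mulVec_mulVec, Matrix.mul_assoc]
  have hθcol : ∀ k, θ k = (Q * G⁻¹ * Qᵀ) k (Sum.inl j) := by
    intro k
    rw [hθV, he', Matrix.mulVec_single]
    simp
  have hθfeas : constrCat r s *ᵥ θ = 0 := (hQnull θ).2 ⟨w₀, hθdef⟩
  -- θ ⬝ᵥ e' = v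
  have hdotθ : θ ⬝ᵥ e' = v := by
    rw [he', dotProduct_single, mul_one, hθcol, hvdef]
  have hdotθ' : w₀ ⬝ᵥ b = v := by
    have h1 : θ ⬝ᵥ e' = b ⬝ᵥ w₀ := by
      rw [hθdef, dotProduct_comm, Matrix.dotProduct_mulVec, ← Matrix.mulVec_transpose, ← hb]
    rw [dotProduct_comm, ← h1, hdotθ]
  -- ‖X θ‖² = v
  have hGw₀ : G *ᵥ w₀ = b := by
    rw [hw₀, Matrix.mulVec_mulVec, Matrix.mul_nonsing_inv _ hGram, Matrix.one_mulVec]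
  have hXθ : (X *ᵥ θ) ⬝ᵥ (X *ᵥ θ) = v := by
    rw [hθdef, Matrix.mulVec_mulVec, ← dot_gram, ← hGdef, hGw₀, hdotθ']
  have hv0 : 0 ≤ v := hXθ ▸ dot_self_nonneg' _
  -- decomposition of X θ
  set θ' : (Unit ⊕ Fin LR ⊕ Fin LS) → ℝ := fun j' => θ (Sum.inl j') with hθ'
  set γ : Fin LR × Fin LS → ℝ := fun p => θ (Sum.inr p) with hγ
  set fI : Fin n → ℝ := fun i => γ (r i, s i) with hfI
  have hdecomp : X *ᵥ θ = XM *ᵥ θ' + fI := by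
    funext i
    have e2 : ∀ p : Fin LR × Fin LS,
        X i (Sum.inr p) = (if r i = p.1 ∧ s i = p.2 then (1:ℝ) else 0) := by
      rintro ⟨ℓ, m⟩; rfl
    simp only [Matrix.mulVec, dotProduct, Fintype.sum_sum_type, Pi.add_apply, e2, hfI, hγ, hθ']
    rw [sum_ind]
    rfl
  -- orthogonality
  have horth : (XM *ᵥ θ') ⬝ᵥ fI = 0 := by
    have hrow1 : ∀ ℓ : Fin LR,
        ∑ m : Fin LS,
          (((univ.filter (fun i : Fin n => r i = ℓ ∧ s i = m)).card : ℝ) / n) * γ (ℓ, m) = 0 := by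
      intro ℓ
      have h := congrFun hθfeas (Sum.inr (Sum.inl ℓ))
      simp only [Matrix.mulVec, dotProduct, constrCat, Matrix.of_apply, Fintype.sum_sum_type,
        Fintype.sum_prod_type, Pi.zero_apply, zero_mul, Finset.sum_const_zero, zero_add,
        ite_mul, Finset.sum_ite_irrel, Finset.sum_const_zero, Finset.sum_ite_eq',
        Finset.mem_univ, if_true, hγ] at h
      exact h
    have hrow2 : ∀ m : Fin LS,
        ∑ ℓ : Fin LR,
          (((univ.filter (fun i : Fin n => r i = ℓ ∧ s i = m)).card : ℝ) / n) * γ (ℓ, m) = 0 := by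
      intro m
      have h := congrFun hθfeas (Sum.inr (Sum.inr m))
      simp only [Matrix.mulVec, dotProduct, constrCat, Matrix.of_apply, Fintype.sum_sum_type,
        Fintype.sum_prod_type, Pi.zero_apply, zero_mul, Finset.sum_const_zero, zero_add,
        ite_mul, Finset.sum_ite_irrel, Finset.sum_const_zero, Finset.sum_ite_eq',
        Finset.mem_univ, if_true, hγ] at h
      exact h
    rcases Nat.eq_zero_or_pos n with hn | hn
    · subst hn
      simp [dotProduct]
    have hn' : (n : ℝ) ≠ 0 := Nat.cast_ne_zero.2 hn.ne'
    have hrow1' : ∀ ℓ : Fin LR,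
        ∑ m : Fin LS,
          ((univ.filter (fun i : Fin n => r i = ℓ ∧ s i = m)).card : ℝ) * γ (ℓ, m) = 0 := by
      intro ℓ
      have h := hrow1 ℓ
      simp only [div_mul_eq_mul_div, ← Finset.sum_div, div_eq_zero_iff] at h
      exact h.resolve_right hn'
    have hrow2' : ∀ m : Fin LS,
        ∑ ℓ : Fin LR,
          ((univ.filter (fun i : Fin n => r i = ℓ ∧ s i = m)).card : ℝ) * γ (ℓ, m) = 0 := by
      intro m
      have h := hrow2 m
      simp only [div_mul_eq_mul_div, ← Finset.sum_div, div_eq_zero_iff] at h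
      exact h.resolve_right hn'
    set c : ℝ := θ' (Sum.inl ()) with hc
    set β₁ : Fin LR → ℝ := fun ℓ => θ' (Sum.inr (Sum.inl ℓ)) with hβ₁
    set β₂ : Fin LS → ℝ := fun m => θ' (Sum.inr (Sum.inr m)) with hβ₂
    have hfM : ∀ i, (XM *ᵥ θ') i = c + β₁ (r i) + β₂ (s i) := by
      intro i
      simp [hXM, designMain, Matrix.mulVec, dotProduct, Fintype.sum_sum_type, ite_mul,
        Finset.sum_ite_eq, hc, hβ₁, hβ₂]
      ring
    calc (XM *ᵥ θ') ⬝ᵥ fI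
        = ∑ i : Fin n, (fun p : Fin LR × Fin LS => (c + β₁ p.1 + β₂ p.2) * γ p) (r i, s i) := by
          refine Finset.sum_congr rfl fun i _ => ?_
          rw [hfM i]
      _ = ∑ p : Fin LR × Fin LS,
            ((univ.filter (fun i : Fin n => r i = p.1 ∧ s i = p.2)).card : ℝ)
              * ((c + β₁ p.1 + β₂ p.2) * γ p) :=
            sum_fiber_cells r s (fun p => (c + β₁ p.1 + β₂ p.2) * γ p)
      _ = 0 := by
          have expand : ∀ p : Fin LR × Fin LS,
              ((univ.filter (fun i : Fin n => r i = p.1 ∧ s i = p.2)).card : ℝ)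
                  * ((c + β₁ p.1 + β₂ p.2) * γ p)
                = c * (((univ.filter (fun i : Fin n => r i = p.1 ∧ s i = p.2)).card : ℝ) * γ p)
                  + β₁ p.1 * (((univ.filter (fun i : Fin n => r i = p.1 ∧ s i = p.2)).card : ℝ) * γ p)
                  + β₂ p.2 * (((univ.filter (fun i : Fin n => r i = p.1 ∧ s i = p.2)).card : ℝ) * γ p) := by
            intro p; ring
          simp only [expand, Finset.sum_add_distrib, Fintype.sum_prod_type]
          have part1 : ∑ ℓ : Fin LR, ∑ m : Fin LS,
              c * (((univ.filter (fun i : Fin n => r i = ℓ ∧ s i = m)).card : ℝ) * γ (ℓ, m)) = 0 :=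
            Finset.sum_eq_zero fun ℓ _ => by rw [← Finset.mul_sum, hrow1' ℓ, mul_zero]
          have part2 : ∑ ℓ : Fin LR, ∑ m : Fin LS,
              β₁ ℓ * (((univ.filter (fun i : Fin n => r i = ℓ ∧ s i = m)).card : ℝ) * γ (ℓ, m)) = 0 :=
            Finset.sum_eq_zero fun ℓ _ => by rw [← Finset.mul_sum, hrow1' ℓ, mul_zero]
          have part3 : ∑ ℓ : Fin LR, ∑ m : Fin LS,
              β₂ m * (((univ.filter (fun i : Fin n => r i = ℓ ∧ s i = m)).card : ℝ) * γ (ℓ, m)) = 0 := by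
            rw [Finset.sum_comm]
            exact Finset.sum_eq_zero fun m _ => by rw [← Finset.mul_sum, hrow2' m, mul_zero]
          rw [part1, part2, part3]
          ring
  -- main part has smaller design norm
  have hMle : (XM *ᵥ θ') ⬝ᵥ (XM *ᵥ θ') ≤ v := by
    have h1 := dot_self_nonneg' fI
    have h2 : (X *ᵥ θ) ⬝ᵥ (X *ᵥ θ)
        = (XM *ᵥ θ') ⬝ᵥ (XM *ᵥ θ') + 2 * ((XM *ᵥ θ') ⬝ᵥ fI) + fI ⬝ᵥ fI := by
      rw [hdecomp]
      simp only [dotProduct_add, add_dotProduct]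
      rw [dotProduct_comm fI (XM *ᵥ θ')]
      ring
    rw [hXθ] at h2
    linarith [h2, h1, horth]
  -- θ' is feasible for the main model
  have hθ'feas : constrMain r s *ᵥ θ' = 0 := by
    funext k
    have h := congrFun hθfeas (Sum.inl k)
    simp only [Matrix.mulVec, dotProduct, constrCat, Matrix.of_apply, Fintype.sum_sum_type,
      Pi.zero_apply, zero_mul, Finset.sum_const_zero, add_zero] at h
    simpa only [Matrix.mulVec, dotProduct, hθ', Pi.zero_apply, Fintype.sum_sum_type] using h
  obtain ⟨w, hw⟩ := (hQMnull θ').1 hθ'feas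
  -- Cauchy-Schwarz setup
  set a : Fin dM → ℝ := QMᵀ *ᵥ Pi.single j 1 with ha
  set vM : ℝ := (QM * GM⁻¹ * QMᵀ) j j with hvM
  have haQM : a = fun i => QM j i := by
    ext i
    rw [ha, Matrix.mulVec_single]
    simp [Matrix.transpose_apply]
  have happly : ∀ u : Fin dM → ℝ, (QM *ᵥ u) j = a ⬝ᵥ u := by
    intro u
    rw [haQM]
    rfl
  have hvMquad : vM = a ⬝ᵥ GM⁻¹ *ᵥ a := by
    have h1 : (QM * GM⁻¹ * QMᵀ) *ᵥ Pi.single j 1 = QM *ᵥ (GM⁻¹ *ᵥ a) := by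
      rw [ha, Matrix.mulVec_mulVec, Matrix.mulVec_mulVec]
    have h2 : vM = ((QM * GM⁻¹ * QMᵀ) *ᵥ Pi.single j 1) j := by
      rw [Matrix.mulVec_single, hvM]; simp
    rw [h2, h1, happly]
  have hθ'j : θ' j = a ⬝ᵥ w := by
    rw [hw, happly]
  have hwGw : (XM *ᵥ θ') ⬝ᵥ (XM *ᵥ θ') = w ⬝ᵥ GM *ᵥ w := by
    rw [hw, Matrix.mulVec_mulVec, ← dot_gram, ← hGMdef]
  have hvθ'j : θ' j = v := by
    show θ (Sum.inl j) = v
    rw [hθcol]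
  have hCS := cs_gram GM hGMsym hGramM hGMpsd a w
  have hvM0 : 0 ≤ a ⬝ᵥ GM⁻¹ *ᵥ a := inv_psd GM hGMsym hGramM hGMpsd a
  have hkey : v * v ≤ vM * v := by
    calc v * v = (a ⬝ᵥ w) * (a ⬝ᵥ w) := by rw [← hθ'j, hvθ'j]
    _ ≤ (a ⬝ᵥ GM⁻¹ *ᵥ a) * (w ⬝ᵥ GM *ᵥ w) := hCS
    _ = vM * ((XM *ᵥ θ') ⬝ᵥ (XM *ᵥ θ')) := by rw [hvMquad, hwGw]
    _ ≤ vM * v := by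
        exact mul_le_mul_of_nonneg_left hMle (hvMquad ▸ hvM0)
  -- conclude
  rcases eq_or_lt_of_le hv0 with hv | hv
  · rw [← hv, Real.sqrt_zero, mul_zero]
    positivity
  · have hvle : v ≤ vM := by nlinarith
    have hsq : Real.sqrt v ≤ Real.sqrt vM := Real.sqrt_le_sqrt hvle
    calc S * Real.sqrt v ≤ SM * Real.sqrt vM :=
          mul_le_mul hle hsq (Real.sqrt_nonneg _) hSM.le
    _ = SM * Real.sqrt vM := rfl

end
end

section
/- Let y ∈ ℝⁿ and let X_* ∈ ℝ^{n×p}, X₀ ∈ ℝ^{n×q₀}, X₁ ∈ ℝ^{n×q₁}. Let H₀ be the orthogonal projection of ℝⁿ onto the column span of X₀. Assume the concatenated matrices [X_* X₀] and [X_* X₀ X₁] both have full column rank, and assume the orthogonality condition X_*ᵀ (I − H₀) X₁ = 0. Then the OLS coefficient block on X_* from regressing y on (X_*, X₀) equals the OLS coefficient block on X_* from regressing y on (X_*, X₀, X₁): if (β̂_*^M, β̂₀^M) minimizes ‖y − X_* β_* − X₀ β₀‖² and (β̂_*, β̂₀, β̂₁) minimizes ‖y − X_* β_* − X₀ β₀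 − X₁ β₁‖², then β̂_*^M = β̂_*. -/
/-!
Both estimates satisfy the normal equations of the regression on `A = [Xs X₀]`. For the larger
model, split `X₁ β₁ = H₀ X₁ β₁ + (1 - H₀) X₁ β₁`: the first part lies in the column span of `X₀`
and is absorbed by shifting `β₀` to some `β₀ + w`, while the second is orthogonal to `X₀` (as `H₀`
is symmetric and fixes `X₀`) and to `Xs` (the orthogonality condition). So `(βs, β₀ + w)` also
solves the normal equations of the smaller model, whose solution is unique since `A` has full
column rank.
-/

open Matrix

section LeastSquares

variable {R m k : Type*} [Field R] [LinearOrder R] [IsStrictOrderedRing R] [Fintype m] [Fintype k]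

theorem dotProduct_eq_zero_of_forall_le_sub_smul {u v : m → R}
    (h : ∀ t : R, u ⬝ᵥ u ≤ (u - t • v) ⬝ᵥ (u - t • v)) : u ⬝ᵥ v = 0 := by
  have hquad : ∀ t : R, 0 ≤ v ⬝ᵥ v * (t * t) + -2 * (u ⬝ᵥ v) * t + 0 := fun t => by
    have ht := h t
    simp only [sub_dotProduct, dotProduct_sub, smul_dotProduct, dotProduct_smul, smul_eq_mul,
      dotProduct_comm v u] at ht
    linarith
  have hdisc := discrim_le_zero hquad
  rw [discrim] at hdisc
  nlinarith [sq_nonneg (u ⬝ᵥ v)]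

def IsLeastSquares (A : Matrix m k R) (y : m → R) (β : k → R) : Prop :=
  ∀ b : k → R, (y - A *ᵥ β) ⬝ᵥ (y - A *ᵥ β) ≤ (y - A *ᵥ b) ⬝ᵥ (y - A *ᵥ b)

theorem IsLeastSquares.transpose_mulVec_residual_eq_zero {A : Matrix m k R} {y : m → R}
    {β : k → R} (h : IsLeastSquares A y β) : Aᵀ *ᵥ (y - A *ᵥ β) = 0 := by
  set r := y - A *ᵥ β
  have horth : ∀ d, r ⬝ᵥ (A *ᵥ d) = 0 := fun d =>
    dotProduct_eq_zero_of_forall_le_sub_smul fun t => by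
      simpa [mulVec_add, mulVec_smul, sub_add_eq_sub_sub, r] using h (β + t • d)
  rw [mulVec_transpose, ← dotProduct_self_eq_zero, ← dotProduct_mulVec]
  exact horth _

theorem eq_of_transpose_mulVec_sub_eq_zero {A : Matrix m k R} (hA : Function.Injective A.mulVec)
    {y : m → R} {b₁ b₂ : k → R} (h₁ : Aᵀ *ᵥ (y - A *ᵥ b₁) = 0)
    (h₂ : Aᵀ *ᵥ (y - A *ᵥ b₂) = 0) : b₁ = b₂ := by
  have hgram : (Aᵀ * A) *ᵥ (b₂ - b₁) = 0 := by
    rw [← mulVec_mulVec, mulVec_sub, ← sub_sub_sub_cancel_left _ _ y, mulVec_sub, h₁, h₂, sub_zero]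
  have hker : A *ᵥ (b₂ - b₁) = 0 := by
    simpa using (SetLike.ext_iff.mp (ker_mulVecLin_transpose_mul_self A) (b₂ - b₁)).mp hgram
  exact (sub_eq_zero.mp (hA (hker.trans (mulVec_zero A).symm))).symm

end LeastSquares

theorem Matrix.mulVec_injective_of_rank_eq_card {R m n : Type*} [Field R] [Fintype m] [Fintype n]
    {A : Matrix m n R} (h : A.rank = Fintype.card n) : Function.Injective A.mulVec := by
  have := LinearMap.finrank_range_add_finrank_ker A.mulVecLin
  rw [Module.finrank_fintype_fun_eq_card, ← Matrix.rank, h, Nat.add_eq_left,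
    Submodule.finrank_eq_zero, LinearMap.ker_eq_bot] at this
  exact this

theorem Matrix.transpose_mul_one_sub_eq_zero {R m n : Type*} [CommRing R] [Fintype m]
    [DecidableEq m] {H : Matrix m m R} {X : Matrix m n R} (hH : Hᵀ = H) (hX : H * X = X) :
    Xᵀ * (1 - H) = 0 := by
  rw [Matrix.mul_sub, Matrix.mul_one, ← hH, ← transpose_mul, hX, sub_self]

theorem ols_block_invariance_general
    {n p q₀ q₁ : ℕ}
    (y : Fin n → ℝ)
    (Xs : Matrix (Fin n) (Fin p) ℝ)
    (X₀ : Matrix (Fin n) (Fin q₀) ℝ)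
    (X₁ : Matrix (Fin n) (Fin q₁) ℝ)
    -- H₀ is the orthogonal projection onto the column span of X₀
    (H₀ : Matrix (Fin n) (Fin n) ℝ)
    (hH₀symm : H₀ᵀ = H₀)
    (hH₀fix : H₀ * X₀ = X₀)
    (hH₀range : ∀ v : Fin n → ℝ, ∃ w : Fin q₀ → ℝ, H₀.mulVec v = X₀.mulVec w)
    -- full column rank of the concatenated designs
    (hrank1 : (Matrix.fromCols Xs X₀).rank = p + q₀)
    -- orthogonality condition
    (horth : Xsᵀ * (1 - H₀) * X₁ = 0)
    -- OLS estimates from the two regressions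
    (βsM : Fin p → ℝ) (β₀M : Fin q₀ → ℝ)
    (hMmin : ∀ (bs : Fin p → ℝ) (b0 : Fin q₀ → ℝ),
      ∑ i : Fin n, (y i - (Xs.mulVec βsM i + X₀.mulVec β₀M i)) ^ 2 ≤
        ∑ i : Fin n, (y i - (Xs.mulVec bs i + X₀.mulVec b0 i)) ^ 2)
    (βs : Fin p → ℝ) (β₀ : Fin q₀ → ℝ) (β₁ : Fin q₁ → ℝ)
    (hmin : ∀ (bs : Fin p → ℝ) (b0 : Fin q₀ → ℝ) (b1 : Fin q₁ → ℝ),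
      ∑ i : Fin n, (y i - (Xs.mulVec βs i + X₀.mulVec β₀ i + X₁.mulVec β₁ i)) ^ 2 ≤
        ∑ i : Fin n, (y i - (Xs.mulVec bs i + X₀.mulVec b0 i + X₁.mulVec b1 i)) ^ 2) :
    βsM = βs := by
  set A := fromCols Xs X₀
  have hsmall : IsLeastSquares A y (Sum.elim βsM β₀M) := fun b => by
    simpa [dotProduct, sq, A, fromCols_mulVec_sumElim] using hMmin (b ∘ Sum.inl) (b ∘ Sum.inr)
  have hbig : IsLeastSquares A (y - X₁ *ᵥ β₁) (Sum.elim βs β₀) := fun b => by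
    simpa [dotProduct, sq, A, fromCols_mulVec_sumElim, sub_sub, add_comm]
      using hmin (b ∘ Sum.inl) (b ∘ Sum.inr) β₁
  obtain ⟨w, hw⟩ := hH₀range (X₁ *ᵥ β₁)
  have hcross : Aᵀ * (1 - H₀) * X₁ = 0 := by
    rw [transpose_fromCols, fromRows_mul, fromRows_mul, horth,
      transpose_mul_one_sub_eq_zero hH₀symm hH₀fix, Matrix.zero_mul, fromRows_zero]
  have hshift : Aᵀ *ᵥ (y - A *ᵥ Sum.elim βs (β₀ + w)) = 0 := by
    have hres : y - A *ᵥ Sum.elim βs (β₀ + w) =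
        (y - X₁ *ᵥ β₁ - A *ᵥ Sum.elim βs β₀) + ((1 - H₀) * X₁) *ᵥ β₁ := by
      simp only [A, fromCols_mulVec_sumElim, mulVec_add, ← mulVec_mulVec, sub_mulVec,
        one_mulVec, hw]
      abel
    rw [hres, mulVec_add, hbig.transpose_mulVec_residual_eq_zero, mulVec_mulVec, ← Matrix.mul_assoc,
      hcross, zero_mulVec, add_zero]
  have hinj : Function.Injective A.mulVec := mulVec_injective_of_rank_eq_card (by simpa using hrank1)
  exact (Sum.elim_eq_iff.mp (eq_of_transpose_mulVec_sub_eq_zero hinj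
    hsmall.transpose_mulVec_residual_eq_zero hshift)).1

/-- FWL-type invariance of a coefficient block.  If the block `Xs` is
orthogonal to the residual of `X₁` after projecting out `X₀` (i.e.
`Xsᵀ (I − H₀) X₁ = 0`, where `H₀` is the orthogonal projection onto the column span of
`X₀`), and both concatenated designs have full column rank, then the OLS coefficient
block on `Xs` is the same whether or not `X₁` is included in the regression. -/
theorem ols_block_invariance
    {n p q₀ q₁ : ℕ}
    (y : Fin n → ℝ)
    (Xs : Matrix (Fin n) (Fin p) ℝ)
    (X₀ : Matrix (Fin n) (Fin q₀) ℝ)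
    (X₁ : Matrix (Fin n) (Fin q₁) ℝ)
    -- H₀ is the orthogonal projection onto the column span of X₀
    (H₀ : Matrix (Fin n) (Fin n) ℝ)
    (hH₀symm : H₀ᵀ = H₀)
    (hH₀idem : H₀ * H₀ = H₀)
    (hH₀fix : H₀ * X₀ = X₀)
    (hH₀range : ∀ v : Fin n → ℝ, ∃ w : Fin q₀ → ℝ, H₀.mulVec v = X₀.mulVec w)
    -- full column rank of the concatenated designs
    (hrank1 : (Matrix.fromCols Xs X₀).rank = p + q₀)
    (hrank2 : (Matrix.fromCols (Matrix.fromCols Xs X₀) X₁).rank = p + q₀ + q₁)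
    -- orthogonality condition
    (horth : Xsᵀ * (1 - H₀) * X₁ = 0)
    -- OLS estimates from the two regressions
    (βsM : Fin p → ℝ) (β₀M : Fin q₀ → ℝ)
    (hMmin : ∀ (bs : Fin p → ℝ) (b0 : Fin q₀ → ℝ),
      ∑ i : Fin n, (y i - (Xs.mulVec βsM i + X₀.mulVec β₀M i)) ^ 2 ≤
        ∑ i : Fin n, (y i - (Xs.mulVec bs i + X₀.mulVec b0 i)) ^ 2)
    (βs : Fin p → ℝ) (β₀ : Fin q₀ → ℝ) (β₁ : Fin q₁ → ℝ)
    (hmin : ∀ (bs : Fin p → ℝ) (b0 : Fin q₀ → ℝ) (b1 : Fin q₁ → ℝ),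
      ∑ i : Fin n, (y i - (Xs.mulVec βs i + X₀.mulVec β₀ i + X₁.mulVec β₁ i)) ^ 2 ≤
        ∑ i : Fin n, (y i - (Xs.mulVec bs i + X₀.mulVec b0 i + X₁.mulVec b1 i)) ^ 2) :
    βsM = βs :=
  ols_block_invariance_general y Xs X₀ X₁ H₀ hH₀symm hH₀fix hH₀range hrank1 horth βsM β₀M hMmin βs
    β₀ β₁ hmin
end
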